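/- arXiv:1709.02224 — 3 statements merged into one kernel-verified Lean document; each statement's English description precedes it below -/
import Mathlib

section
/- Let (σ₁,σ₂) be a local umbilic-free Legendre map in curvature line coordinates on U with f = span{σ₁,σ₂}. Let σ̂₁,σ̂₂ : U → ℝ^6 be smooth, pointwise linearly independent, spanning f̂ := span{σ̂₁,σ̂₂}, satisfying the isotropy condition ⟨σ̂_i,σ̂_j⟩ = 0 and the contact condition ⟨∂_uσ̂₁,σ̂₂⟩ = ⟨∂_vσ̂₁,σ̂₂⟩ = 0, and let X̂₁, X̂₂ be smooth pointwise linearly independent vector fields on U with ∂_{X̂₁}σ̂₁ ∈ f̂, ∂_{X̂₂}σ̂₂ ∈ f̂, ∂_{X̂₂}σ̂₁ ∉ f̂ and ∂_{X̂₁}σ̂₂ ∉ f̂ at every point (so f̂ is an umbilic-free Legendre map with curvature spheres span{σ̂₁}, span{σ̂₂} and curvature directions X̂₁, X̂₂). Assume that f(p) ∩ f̂(p) is 1-dimensional for every p, spanned by a smooth nowhere-zero map σ₀ : U → ℝ^6, and that σ₀ is pointwise not parallel to any of σ₁, σ₂, σ̂₁, σ̂₂. Then X̂₁ is pointwise parallel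 to ∂_u and X̂₂ is pointwise parallel to ∂_v (i.e. f and f̂ are Ribaucour transforms of each other) if and only if at every point ∂_{X̂₂}σ̂₁ ∈ span{σ₁, σ̂₁, ∂_vσ₁} and ∂_{X̂₁}σ̂₂ ∈ span{σ₂, σ̂₂, ∂_uσ₂}. -/
noncomputable section

/-- `ℝ^{4,2}`: `ℝ^6` with a bilinear form of signature (4,2). -/
abbrev V6 : Type := Fin 6 → ℝ

/-- The symmetric bilinear form of signature (4,2) on `ℝ^6`. -/
def form (x y : V6) : ℝ :=
  x 0 * y 0 + x 1 * y 1 + x 2 * y 2 + x 3 * y 3 - x 4 * y 4 - x 5 * y 5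

/-- Partial derivative in the first (`u`) coordinate. -/
def pu (σ : ℝ × ℝ → V6) (p : ℝ × ℝ) : V6 := fderiv ℝ σ p (1, 0)

/-- Partial derivative in the second (`v`) coordinate. -/
def pv (σ : ℝ × ℝ → V6) (p : ℝ × ℝ) : V6 := fderiv ℝ σ p (0, 1)

/-- The contact plane `f = span{σ₁, σ₂}`. -/
def spanF (σ₁ σ₂ : ℝ × ℝ → V6) (p : ℝ × ℝ) : Submodule ℝ V6 :=
  Submodule.span ℝ {σ₁ p, σ₂ p}

/-- A local umbilic-free Legendre map in curvature line coordinates `(u,v)` on `U`,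
given by lifts `σ₁, σ₂` of the two curvature sphere congruences, with curvature
directions `T₁ = ∂_u` (for `s₁ = span{σ₁}`) and `T₂ = ∂_v` (for `s₂ = span{σ₂}`). -/
structure IsLegendre (U : Set (ℝ × ℝ)) (σ₁ σ₂ : ℝ × ℝ → V6) : Prop where
  open_U : IsOpen U
  smooth₁ : ContDiffOn ℝ (⊤ : ℕ∞) σ₁ U
  smooth₂ : ContDiffOn ℝ (⊤ : ℕ∞) σ₂ U
  indep : ∀ p ∈ U, LinearIndependent ℝ ![σ₁ p, σ₂ p]
  iso₁₁ : ∀ p ∈ U, form (σ₁ p) (σ₁ p) = 0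
  iso₁₂ : ∀ p ∈ U, form (σ₁ p) (σ₂ p) = 0
  iso₂₂ : ∀ p ∈ U, form (σ₂ p) (σ₂ p) = 0
  contact_u : ∀ p ∈ U, form (pu σ₁ p) (σ₂ p) = 0
  contact_v : ∀ p ∈ U, form (pv σ₁ p) (σ₂ p) = 0
  curv₁ : ∀ p ∈ U, pu σ₁ p ∈ spanF σ₁ σ₂ p
  curv₂ : ∀ p ∈ U, pv σ₂ p ∈ spanF σ₁ σ₂ p
  umb₁ : ∀ p ∈ U, pv σ₁ p ∉ spanF σ₁ σ₂ p
  umb₂ : ∀ p ∈ U, pu σ₂ p ∉ spanF σ₁ σ₂ p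

namespace Rib

open Module


lemma form_comm (x y : V6) : form x y = form y x := by simp [form]; ring

lemma form_add_left (x y z : V6) : form (x + y) z = form x z + form y z := by
  simp [form]; ring

lemma form_smul_left (r : ℝ) (x z : V6) : form (r • x) z = r * form x z := by
  simp [form]; ring

lemma form_add_right (x y z : V6) : form x (y + z) = form x y + form x z := by
  simp [form]; ring

lemma form_smul_right (r : ℝ) (x z : V6) : form x (r • z) = r * form x z := by
  simp [form]; ring

lemma form_zero_left (z : V6) : form 0 z = 0 := by simp [form]

lemma form_zero_right (z : V6) : form z 0 = 0 := by simp [form]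

/-- dot product -/
def dt (x y : V6) : ℝ := x 0 * y 0 + x 1 * y 1 + x 2 * y 2 + x 3 * y 3 + x 4 * y 4 + x 5 * y 5

lemma dt_comm (x y : V6) : dt x y = dt y x := by simp [dt]; ring

lemma eq_zero_of_dt_self (x : V6) (h : dt x x = 0) : x = 0 := by
  simp only [dt] at h
  have n0 := mul_self_nonneg (x 0); have n1 := mul_self_nonneg (x 1)
  have n2 := mul_self_nonneg (x 2); have n3 := mul_self_nonneg (x 3)
  have n4 := mul_self_nonneg (x 4); have n5 := mul_self_nonneg (x 5)
  funext i
  fin_cases i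
  · show x 0 = 0; exact mul_self_eq_zero.1 (by linarith)
  · show x 1 = 0; exact mul_self_eq_zero.1 (by linarith)
  · show x 2 = 0; exact mul_self_eq_zero.1 (by linarith)
  · show x 3 = 0; exact mul_self_eq_zero.1 (by linarith)
  · show x 4 = 0; exact mul_self_eq_zero.1 (by linarith)
  · show x 5 = 0; exact mul_self_eq_zero.1 (by linarith)

/-- sign-flip map: `form x (J y) = dt x y`. -/
def J (x : V6) : V6 := fun i => if (i : ℕ) < 4 then x i else -(x i)

lemma form_J (x y : V6) : form x (J y) = dt x y := by
  have h0 : J y 0 = y 0 := rfl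
  have h1 : J y 1 = y 1 := rfl
  have h2 : J y 2 = y 2 := rfl
  have h3 : J y 3 = y 3 := rfl
  have h4 : J y 4 = -(y 4) := rfl
  have h5 : J y 5 = -(y 5) := rfl
  simp only [form, dt, h0, h1, h2, h3, h4, h5]; ring

lemma pair_indep_iff {x y : V6} :
    LinearIndependent ℝ ![x, y] ↔ ∀ s t : ℝ, s • x + t • y = 0 → s = 0 ∧ t = 0 :=
  LinearIndependent.pair_iff

/-- Gram determinant of independent vectors is nonzero. -/
lemma gram_ne_zero {x y : V6} (h : LinearIndependent ℝ ![x, y]) :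
    dt x x * dt y y - dt x y * dt x y ≠ 0 := by
  intro hG
  have hy : y ≠ 0 := by
    intro h0
    rcases (pair_indep_iff.1 h 0 1 (by simp [h0])) with ⟨-, h1⟩
    norm_num at h1
  set z : V6 := dt y y • x - dt x y • y with hz
  have key : dt z z = dt y y * (dt x x * dt y y - dt x y * dt x y) := by
    simp only [hz, dt, Pi.sub_apply, Pi.smul_apply, smul_eq_mul]; ring
  have hzz : dt z z = 0 := by rw [key, hG, mul_zero]
  have hz0 : z = 0 := eq_zero_of_dt_self z hzz
  have hyy : dt y y ≠ 0 := fun h0 => hy (eq_zero_of_dt_self y (by rw [h0]))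
  have := pair_indep_iff.1 h (dt y y) (-(dt x y)) (by
    simpa [hz, sub_eq_add_neg, neg_smul] using hz0)
  exact hyy this.1



lemma mem_span_triple {x a b c : V6} :
    x ∈ Submodule.span ℝ ({a, b, c} : Set V6) ↔ ∃ r s t : ℝ, x = r • a + s • b + t • c := by
  constructor
  · intro hx
    rcases Submodule.mem_span_insert.1 hx with ⟨r, z, hz, rfl⟩
    rcases Submodule.mem_span_pair.1 hz with ⟨s, t, rfl⟩
    exact ⟨r, s, t, by abel⟩
  · rintro ⟨r, s, t, rfl⟩
    apply Submodule.add_mem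
    apply Submodule.add_mem
    · exact Submodule.smul_mem _ _ (Submodule.subset_span (by simp))
    · exact Submodule.smul_mem _ _ (Submodule.subset_span (by simp))
    · exact Submodule.smul_mem _ _ (Submodule.subset_span (by simp))

def pd (w : ℝ × ℝ) (σ : ℝ × ℝ → V6) (q : ℝ × ℝ) : V6 := fderiv ℝ σ q w

lemma contDiffAt_of_on {σ : ℝ × ℝ → V6} {U q} (h : ContDiffOn ℝ (⊤ : ℕ∞) σ U) (hU : IsOpen U)
    (hq : q ∈ U) (n : WithTop ℕ∞) (hn : n ≤ ((⊤ : ℕ∞) : WithTop ℕ∞) := by norm_cast) :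
    ContDiffAt ℝ n σ q :=
  (h.contDiffAt (hU.mem_nhds hq)).of_le hn

lemma diffAt {σ : ℝ × ℝ → V6} {U q} (h : ContDiffOn ℝ (⊤ : ℕ∞) σ U) (hU : IsOpen U) (hq : q ∈ U) :
    DifferentiableAt ℝ σ q :=
  (contDiffAt_of_on h hU hq 1).differentiableAt one_ne_zero

lemma pd_diffAt {σ : ℝ × ℝ → V6} {U q} (h : ContDiffOn ℝ (⊤ : ℕ∞) σ U) (hU : IsOpen U) (hq : q ∈ U)
    (w : ℝ × ℝ) : DifferentiableAt ℝ (pd w σ) q := by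
  have h2 := contDiffAt_of_on h hU hq 2
  have hd : DifferentiableAt ℝ (fderiv ℝ σ) q :=
    (h2.fderiv_right (m := 1) (by norm_num)).differentiableAt one_ne_zero
  exact hd.clm_apply (differentiableAt_const w)

lemma pd_comm {σ : ℝ × ℝ → V6} {U q} (h : ContDiffOn ℝ (⊤ : ℕ∞) σ U) (hU : IsOpen U) (hq : q ∈ U)
    (w₁ w₂ : ℝ × ℝ) : pd w₁ (pd w₂ σ) q = pd w₂ (pd w₁ σ) q := by
  have h2 := contDiffAt_of_on h hU hq 2
  have hsymm := h2.isSymmSndFDerivAt (by simp)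
  have hd : DifferentiableAt ℝ (fderiv ℝ σ) q :=
    (h2.fderiv_right (m := 1) (by norm_num)).differentiableAt one_ne_zero
  have e : ∀ w w' : ℝ × ℝ, pd w (pd w' σ) q = fderiv ℝ (fderiv ℝ σ) q w w' := by
    intro w w'
    show fderiv ℝ (fun p => fderiv ℝ σ p w') q w = _
    rw [fderiv_clm_apply hd (differentiableAt_const w')]
    simp
  rw [e, e, hsymm]

lemma fderiv_form_apply {φ ψ : ℝ × ℝ → V6} {q : ℝ × ℝ}
    (hφ : DifferentiableAt ℝ φ q) (hψ : DifferentiableAt ℝ ψ q) (w : ℝ × ℝ) :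
    fderiv ℝ (fun p => form (φ p) (ψ p)) q w
      = form (fderiv ℝ φ q w) (ψ q) + form (φ q) (fderiv ℝ ψ q w) := by
  have hφ' := hφ.hasFDerivAt
  have hψ' := hψ.hasFDerivAt
  have hc : ∀ i : Fin 6, HasFDerivAt (fun p => φ p i)
      ((ContinuousLinearMap.proj i).comp (fderiv ℝ φ q)) q := fun i =>
    ((ContinuousLinearMap.proj (R := ℝ) (φ := fun _ : Fin 6 => ℝ) i).hasFDerivAt).comp q hφ'
  have hd : ∀ i : Fin 6, HasFDerivAt (fun p => ψ p i)
      ((ContinuousLinearMap.proj i).comp (fderiv ℝ ψ q)) q := fun i =>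
    ((ContinuousLinearMap.proj (R := ℝ) (φ := fun _ : Fin 6 => ℝ) i).hasFDerivAt).comp q hψ'
  have H := ((((((hc 0).mul (hd 0)).add ((hc 1).mul (hd 1))).add ((hc 2).mul (hd 2))).add
      ((hc 3).mul (hd 3))).sub ((hc 4).mul (hd 4))).sub ((hc 5).mul (hd 5))
  have Hf : fderiv ℝ (fun p => form (φ p) (ψ p)) q
      = (φ q 0 • (ContinuousLinearMap.proj 0).comp (fderiv ℝ ψ q) +
          ψ q 0 • (ContinuousLinearMap.proj 0).comp (fderiv ℝ φ q) +
          (φ q 1 • (ContinuousLinearMap.proj 1).comp (fderiv ℝ ψ q) +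
            ψ q 1 • (ContinuousLinearMap.proj 1).comp (fderiv ℝ φ q)) +
          (φ q 2 • (ContinuousLinearMap.proj 2).comp (fderiv ℝ ψ q) +
            ψ q 2 • (ContinuousLinearMap.proj 2).comp (fderiv ℝ φ q)) +
          (φ q 3 • (ContinuousLinearMap.proj 3).comp (fderiv ℝ ψ q) +
            ψ q 3 • (ContinuousLinearMap.proj 3).comp (fderiv ℝ φ q)) -
          (φ q 4 • (ContinuousLinearMap.proj 4).comp (fderiv ℝ ψ q) +
            ψ q 4 • (ContinuousLinearMap.proj 4).comp (fderiv ℝ φ q)) -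
          (φ q 5 • (ContinuousLinearMap.proj 5).comp (fderiv ℝ ψ q) +
            ψ q 5 • (ContinuousLinearMap.proj 5).comp (fderiv ℝ φ q))) := H.fderiv
  rw [Hf]
  simp only [ContinuousLinearMap.add_apply, ContinuousLinearMap.sub_apply,
    ContinuousLinearMap.smul_apply, ContinuousLinearMap.comp_apply,
    ContinuousLinearMap.proj_apply, smul_eq_mul, form]
  ring

lemma deriv_form_zero {U : Set (ℝ × ℝ)} (hU : IsOpen U) {q : ℝ × ℝ} (hq : q ∈ U)
    {φ ψ : ℝ × ℝ → V6} (hφ : DifferentiableAt ℝ φ q) (hψ : DifferentiableAt ℝ ψ q)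
    (h0 : ∀ p ∈ U, form (φ p) (ψ p) = 0) (w : ℝ × ℝ) :
    form (fderiv ℝ φ q w) (ψ q) + form (φ q) (fderiv ℝ ψ q w) = 0 := by
  rw [← fderiv_form_apply hφ hψ w]
  have he : (fun p => form (φ p) (ψ p)) =ᶠ[nhds q] (fun _ => (0 : ℝ)) :=
    Filter.eventuallyEq_of_mem (hU.mem_nhds hq) (fun p hp => h0 p hp)
  rw [he.fderiv_eq]
  simp






lemma dt_smul_add (r s : ℝ) (x y z : V6) : dt (r • x + s • y) z = r * dt x z + s * dt y z := by
  simp [dt]; ring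

lemma dt_comm' (x y : V6) : dt x y = dt y x := by simp [dt]; ring

lemma diffAt_dt {φ ψ : ℝ × ℝ → V6} {q : ℝ × ℝ}
    (hφ : DifferentiableAt ℝ φ q) (hψ : DifferentiableAt ℝ ψ q) :
    DifferentiableAt ℝ (fun p => dt (φ p) (ψ p)) q := by
  have hc : ∀ i : Fin 6, DifferentiableAt ℝ (fun p => φ p i) q := fun i =>
    ((ContinuousLinearMap.proj (R := ℝ) (φ := fun _ : Fin 6 => ℝ) i).differentiableAt).comp q hφ
  have hd : ∀ i : Fin 6, DifferentiableAt ℝ (fun p => ψ p i) q := fun i =>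
    ((ContinuousLinearMap.proj (R := ℝ) (φ := fun _ : Fin 6 => ℝ) i).differentiableAt).comp q hψ
  exact (((((((hc 0).mul (hd 0)).add ((hc 1).mul (hd 1))).add ((hc 2).mul (hd 2))).add
      ((hc 3).mul (hd 3))).add ((hc 4).mul (hd 4))).add ((hc 5).mul (hd 5)))

/-- Cramer coefficient: the `σ₁`-coefficient of `σ₀` in the basis `(σ₁, σ₂)`. -/
def cra (σ₁ σ₂ σ₀ : ℝ × ℝ → V6) (p : ℝ × ℝ) : ℝ :=
  (dt (σ₀ p) (σ₁ p) * dt (σ₂ p) (σ₂ p) - dt (σ₀ p) (σ₂ p) * dt (σ₁ p) (σ₂ p)) /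
    (dt (σ₁ p) (σ₁ p) * dt (σ₂ p) (σ₂ p) - dt (σ₁ p) (σ₂ p) * dt (σ₁ p) (σ₂ p))

lemma cra_eq {σ₁ σ₂ σ₀ : ℝ × ℝ → V6} {p : ℝ × ℝ} {α β : ℝ}
    (hind : LinearIndependent ℝ ![σ₁ p, σ₂ p])
    (hx : α • σ₁ p + β • σ₂ p = σ₀ p) : cra σ₁ σ₂ σ₀ p = α := by
  have hG := gram_ne_zero hind
  have e1 : dt (σ₀ p) (σ₁ p) = α * dt (σ₁ p) (σ₁ p) + β * dt (σ₂ p) (σ₁ p) := by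
    rw [← hx, dt_smul_add]
  have e2 : dt (σ₀ p) (σ₂ p) = α * dt (σ₁ p) (σ₂ p) + β * dt (σ₂ p) (σ₂ p) := by
    rw [← hx, dt_smul_add]
  rw [cra, e1, e2, dt_comm' (σ₂ p) (σ₁ p)]
  rw [div_eq_iff hG]
  ring

lemma cra_spec {σ₁ σ₂ σ₀ : ℝ × ℝ → V6} {p : ℝ × ℝ}
    (hind : LinearIndependent ℝ ![σ₁ p, σ₂ p])
    (hmem : σ₀ p ∈ Submodule.span ℝ ({σ₁ p, σ₂ p} : Set V6)) :
    σ₀ p = cra σ₁ σ₂ σ₀ p • σ₁ p + cra σ₂ σ₁ σ₀ p • σ₂ p := by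
  rcases Submodule.mem_span_pair.1 hmem with ⟨α, β, hx⟩
  have hswap : LinearIndependent ℝ ![σ₂ p, σ₁ p] := by
    rw [pair_indep_iff] at hind ⊢
    intro s t hst
    have := hind t s (by rw [add_comm] at hst; exact hst)
    exact ⟨this.2, this.1⟩
  rw [cra_eq hind hx, cra_eq hswap (by rw [add_comm] at hx; exact hx), hx]

lemma cra_diffAt {σ₁ σ₂ σ₀ : ℝ × ℝ → V6} {q : ℝ × ℝ}
    (h1 : DifferentiableAt ℝ σ₁ q) (h2 : DifferentiableAt ℝ σ₂ q)
    (h0 : DifferentiableAt ℝ σ₀ q) (hind : LinearIndependent ℝ ![σ₁ q, σ₂ q]) :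
    DifferentiableAt ℝ (cra σ₁ σ₂ σ₀) q := by
  unfold cra
  have hnum : DifferentiableAt ℝ
      (fun p => dt (σ₀ p) (σ₁ p) * dt (σ₂ p) (σ₂ p) - dt (σ₀ p) (σ₂ p) * dt (σ₁ p) (σ₂ p)) q :=
    ((diffAt_dt h0 h1).mul (diffAt_dt h2 h2)).sub ((diffAt_dt h0 h2).mul (diffAt_dt h1 h2))
  have hden : DifferentiableAt ℝ
      (fun p => dt (σ₁ p) (σ₁ p) * dt (σ₂ p) (σ₂ p) - dt (σ₁ p) (σ₂ p) * dt (σ₁ p) (σ₂ p)) q :=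
    ((diffAt_dt h1 h1).mul (diffAt_dt h2 h2)).sub ((diffAt_dt h1 h2).mul (diffAt_dt h1 h2))
  simp only [div_eq_mul_inv]
  exact hnum.mul (hden.inv (gram_ne_zero hind))

/-- derivative of a decomposition -/
lemma pd_decomp {U : Set (ℝ × ℝ)} (hU : IsOpen U) {q : ℝ × ℝ} (hq : q ∈ U)
    {a b : ℝ × ℝ → ℝ} {σ₀ σ₁ σ₂ : ℝ × ℝ → V6}
    (ha : DifferentiableAt ℝ a q) (hb : DifferentiableAt ℝ b q)
    (h1 : DifferentiableAt ℝ σ₁ q) (h2 : DifferentiableAt ℝ σ₂ q)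
    (hid : ∀ p ∈ U, σ₀ p = a p • σ₁ p + b p • σ₂ p) (w : ℝ × ℝ) :
    ∃ r s : ℝ, fderiv ℝ σ₀ q w
      = r • σ₁ q + s • σ₂ q + a q • fderiv ℝ σ₁ q w + b q • fderiv ℝ σ₂ q w := by
  have he : σ₀ =ᶠ[nhds q] (fun p => a p • σ₁ p + b p • σ₂ p) :=
    Filter.eventuallyEq_of_mem (hU.mem_nhds hq) (fun p hp => hid p hp)
  have H := (ha.hasFDerivAt.smul h1.hasFDerivAt).add (hb.hasFDerivAt.smul h2.hasFDerivAt)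
  refine ⟨fderiv ℝ a q w, fderiv ℝ b q w, ?_⟩
  rw [he.fderiv_eq, show (fun p => a p • σ₁ p + b p • σ₂ p) = a • σ₁ + b • σ₂ from rfl, H.fderiv]
  simp only [ContinuousLinearMap.add_apply, ContinuousLinearMap.smul_apply,
    ContinuousLinearMap.smulRight_apply, ContinuousLinearMap.coe_smul', Pi.smul_apply]
  module





/-- no 3-dimensional totally isotropic subspace in signature (4,2) -/
lemma iso3_false {z₁ z₂ z₃ : V6}
    (hind : ∀ α β γ : ℝ, α • z₁ + β • z₂ + γ • z₃ = 0 → α = 0 ∧ β = 0 ∧ γ = 0)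
    (h11 : form z₁ z₁ = 0) (h12 : form z₁ z₂ = 0) (h13 : form z₁ z₃ = 0)
    (h22 : form z₂ z₂ = 0) (h23 : form z₂ z₃ = 0) (h33 : form z₃ z₃ = 0) : False := by
  classical
  set v : Fin 3 → ℝ × ℝ := ![(z₁ 4, z₁ 5), (z₂ 4, z₂ 5), (z₃ 4, z₃ 5)] with hv
  have hnind : ¬ LinearIndependent ℝ v := by
    intro hli
    have := hli.fintype_card_le_finrank (R := ℝ)
    simp at this
  rcases Fintype.not_linearIndependent_iff.1 hnind with ⟨g, hsum, i, hgi⟩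
  rw [Fin.sum_univ_three] at hsum
  simp only [hv, Matrix.cons_val_zero, Matrix.cons_val_one, Matrix.head_cons,
    Matrix.cons_val_two, Matrix.tail_cons, Prod.smul_mk, smul_eq_mul] at hsum
  have h4 : g 0 * z₁ 4 + g 1 * z₂ 4 + g 2 * z₃ 4 = 0 := by
    have := congrArg Prod.fst hsum
    simpa using this
  have h5 : g 0 * z₁ 5 + g 1 * z₂ 5 + g 2 * z₃ 5 = 0 := by
    have := congrArg Prod.snd hsum
    simpa using this
  set w : V6 := g 0 • z₁ + g 1 • z₂ + g 2 • z₃ with hw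
  have hww : form w w = 0 := by
    simp only [hw, form, Pi.add_apply, Pi.smul_apply, smul_eq_mul]
    simp only [form] at h11 h12 h13 h22 h23 h33
    linear_combination (g 0 * g 0) * h11 + (2 * g 0 * g 1) * h12 + (2 * g 0 * g 2) * h13 +
      (g 1 * g 1) * h22 + (2 * g 1 * g 2) * h23 + (g 2 * g 2) * h33
  have hw4 : w 4 = 0 := by simp only [hw, Pi.add_apply, Pi.smul_apply, smul_eq_mul]; linarith
  have hw5 : w 5 = 0 := by simp only [hw, Pi.add_apply, Pi.smul_apply, smul_eq_mul]; linarith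
  have hw0 : w = 0 := by
    simp only [form, hw4, hw5] at hww
    have n0 := mul_self_nonneg (w 0); have n1 := mul_self_nonneg (w 1)
    have n2 := mul_self_nonneg (w 2); have n3 := mul_self_nonneg (w 3)
    funext j
    fin_cases j
    · show w 0 = 0; exact mul_self_eq_zero.1 (by linarith)
    · show w 1 = 0; exact mul_self_eq_zero.1 (by linarith)
    · show w 2 = 0; exact mul_self_eq_zero.1 (by linarith)
    · show w 3 = 0; exact mul_self_eq_zero.1 (by linarith)
    · show w 4 = 0; exact hw4
    · show w 5 = 0; exact hw5
  have := hind (g 0) (g 1) (g 2) hw0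
  fin_cases i
  · exact hgi this.1
  · exact hgi this.2.1
  · exact hgi this.2.2

/-- A vector orthogonal to a maximal isotropic 2-plane but not in it has positive norm. -/
lemma perp_pos {s₁ s₂ ξ : V6}
    (hind : LinearIndependent ℝ ![s₁, s₂])
    (h11 : form s₁ s₁ = 0) (h12 : form s₁ s₂ = 0) (h22 : form s₂ s₂ = 0)
    (hp1 : form ξ s₁ = 0) (hp2 : form ξ s₂ = 0)
    (hn : ξ ∉ Submodule.span ℝ ({s₁, s₂} : Set V6)) : 0 < form ξ ξ := by
  have iso_comb : ∀ (r s : ℝ) (x y : V6), form x x = 0 → form x y = 0 → form y y = 0 →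
      form (r • x + s • y) (r • x + s • y) = 0 := by
    intro r s x y a b c
    simp only [form, Pi.add_apply, Pi.smul_apply, smul_eq_mul]
    simp only [form] at a b c
    linear_combination (r * r) * a + (2 * r * s) * b + (s * s) * c
  have zero_of : ∀ x : V6, form x x = 0 → x 4 = 0 → x 5 = 0 → x = 0 := by
    intro x hx h4 h5
    simp only [form, h4, h5] at hx
    have n0 := mul_self_nonneg (x 0); have n1 := mul_self_nonneg (x 1)
    have n2 := mul_self_nonneg (x 2); have n3 := mul_self_nonneg (x 3)
    funext j
    fin_cases j
    · show x 0 = 0; exact mul_self_eq_zero.1 (by linarith)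
    · show x 1 = 0; exact mul_self_eq_zero.1 (by linarith)
    · show x 2 = 0; exact mul_self_eq_zero.1 (by linarith)
    · show x 3 = 0; exact mul_self_eq_zero.1 (by linarith)
    · show x 4 = 0; exact h4
    · show x 5 = 0; exact h5
  have hs1 : s₁ ≠ 0 := by
    intro h0
    exact one_ne_zero (pair_indep_iff.1 hind 1 0 (by simp [h0])).1
  set D : ℝ := s₁ 4 * s₂ 5 - s₁ 5 * s₂ 4 with hD
  have hDne : D ≠ 0 := by
    intro hD0
    have hz : (s₂ 5 • s₁ - s₁ 5 • s₂ : V6) = 0 := by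
      apply zero_of
      · have := iso_comb (s₂ 5) (-(s₁ 5)) s₁ s₂ h11 h12 h22
        simpa [sub_eq_add_neg, neg_smul] using this
      · simp only [Pi.sub_apply, Pi.smul_apply, smul_eq_mul]; linarith
      · simp only [Pi.sub_apply, Pi.smul_apply, smul_eq_mul]; ring
    have h15 := pair_indep_iff.1 hind (s₂ 5) (-(s₁ 5))
      (by simpa [sub_eq_add_neg, neg_smul] using hz)
    have hz' : (s₂ 4 • s₁ - s₁ 4 • s₂ : V6) = 0 := by
      apply zero_of
      · have := iso_comb (s₂ 4) (-(s₁ 4)) s₁ s₂ h11 h12 h22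
        simpa [sub_eq_add_neg, neg_smul] using this
      · simp only [Pi.sub_apply, Pi.smul_apply, smul_eq_mul]; ring
      · simp only [Pi.sub_apply, Pi.smul_apply, smul_eq_mul]; linarith
    have h14 := pair_indep_iff.1 hind (s₂ 4) (-(s₁ 4))
      (by simpa [sub_eq_add_neg, neg_smul] using hz')
    apply hs1
    apply zero_of s₁ h11
    · exact neg_eq_zero.1 h14.2
    · exact neg_eq_zero.1 h15.2
  set α : ℝ := (ξ 4 * s₂ 5 - ξ 5 * s₂ 4) / D with hα
  set β : ℝ := (s₁ 4 * ξ 5 - s₁ 5 * ξ 4) / D with hβ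
  set η : V6 := ξ - α • s₁ - β • s₂ with hη
  have hη4 : η 4 = 0 := by
    simp only [hη, Pi.sub_apply, Pi.smul_apply, smul_eq_mul, hα, hβ]
    field_simp
    ring
  have hη5 : η 5 = 0 := by
    simp only [hη, Pi.sub_apply, Pi.smul_apply, smul_eq_mul, hα, hβ]
    field_simp
    ring
  have hkey : form ξ ξ = form η η := by
    simp only [hη, form, Pi.sub_apply, Pi.smul_apply, smul_eq_mul]
    simp only [form] at h11 h12 h22 hp1 hp2
    linear_combination (2 * α) * hp1 + (2 * β) * hp2 - (α * α) * h11 - (2 * α * β) * h12 -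
      (β * β) * h22
  have hform : form η η = η 0 * η 0 + η 1 * η 1 + η 2 * η 2 + η 3 * η 3 := by
    simp only [form, hη4, hη5]; ring
  rcases lt_or_eq_of_le (by
      rw [hform]
      have n0 := mul_self_nonneg (η 0); have n1 := mul_self_nonneg (η 1)
      have n2 := mul_self_nonneg (η 2); have n3 := mul_self_nonneg (η 3)
      linarith : (0 : ℝ) ≤ form η η) with hlt | heq
  · rw [hkey]; exact hlt
  · exfalso
    have hη0 : η = 0 := zero_of η heq.symm hη4 hη5
    apply hn
    have : ξ = α • s₁ + β • s₂ := by
      have := sub_eq_zero.1 (by simpa [hη, sub_sub] using hη0)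
      linear_combination (norm := module) this
    rw [this]
    exact Submodule.mem_span_pair.2 ⟨α, β, rfl⟩


lemma pair_ne_zero {x y : V6} (h : LinearIndependent ℝ ![x, y]) : x ≠ 0 ∧ y ≠ 0 := by
  constructor
  · intro h0
    exact one_ne_zero (pair_indep_iff.1 h 1 0 (by simp [h0])).1
  · intro h0
    exact one_ne_zero (pair_indep_iff.1 h 0 1 (by simp [h0])).2

lemma pair_swap {x y : V6} (h : LinearIndependent ℝ ![x, y]) : LinearIndependent ℝ ![y, x] := by
  rw [pair_indep_iff] at h ⊢
  intro s t hst
  have := h t s (by rw [add_comm] at hst; exact hst)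
  exact ⟨this.2, this.1⟩

lemma form_comb2_right (ξ a b : V6) (r s : ℝ) :
    form ξ (r • a + s • b) = r * form ξ a + s * form ξ b := by
  simp [form]; ring

lemma form_comb2_left (ξ a b : V6) (r s : ℝ) :
    form (r • a + s • b) ξ = r * form a ξ + s * form b ξ := by
  simp [form]; ring

lemma perp_span_pair {ξ a b z : V6} (hz : z ∈ Submodule.span ℝ ({a, b} : Set V6))
    (ha : form ξ a = 0) (hb : form ξ b = 0) : form ξ z = 0 := by
  rcases Submodule.mem_span_pair.1 hz with ⟨r, s, rfl⟩
  rw [form_comb2_right, ha, hb]; ring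

lemma perp_span_pair' {ξ a b z : V6} (hz : z ∈ Submodule.span ℝ ({a, b} : Set V6))
    (ha : form a ξ = 0) (hb : form b ξ = 0) : form z ξ = 0 := by
  rcases Submodule.mem_span_pair.1 hz with ⟨r, s, rfl⟩
  rw [form_comb2_left, ha, hb]; ring

lemma spanF_comm (σ₁ σ₂ : ℝ × ℝ → V6) (p : ℝ × ℝ) : spanF σ₂ σ₁ p = spanF σ₁ σ₂ p := by
  unfold spanF
  rw [Set.pair_comm]

/-- All the standing hypotheses, in a form symmetric under `(w₁,σ₁,τ₁) ↔ (w₂,σ₂,τ₂)`. -/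
structure Pack (U : Set (ℝ × ℝ)) (w₁ w₂ : ℝ × ℝ) (σ₁ σ₂ τ₁ τ₂ σ₀ : ℝ × ℝ → V6) : Prop where
  hU : IsOpen U
  sm1 : ContDiffOn ℝ (⊤ : ℕ∞) σ₁ U
  sm2 : ContDiffOn ℝ (⊤ : ℕ∞) σ₂ U
  st1 : ContDiffOn ℝ (⊤ : ℕ∞) τ₁ U
  st2 : ContDiffOn ℝ (⊤ : ℕ∞) τ₂ U
  sm0 : ContDiffOn ℝ (⊤ : ℕ∞) σ₀ U
  ind : ∀ p ∈ U, LinearIndependent ℝ ![σ₁ p, σ₂ p]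
  indτ : ∀ p ∈ U, LinearIndependent ℝ ![τ₁ p, τ₂ p]
  i11 : ∀ p ∈ U, form (σ₁ p) (σ₁ p) = 0
  i12 : ∀ p ∈ U, form (σ₁ p) (σ₂ p) = 0
  i22 : ∀ p ∈ U, form (σ₂ p) (σ₂ p) = 0
  j11 : ∀ p ∈ U, form (τ₁ p) (τ₁ p) = 0
  j12 : ∀ p ∈ U, form (τ₁ p) (τ₂ p) = 0
  j22 : ∀ p ∈ U, form (τ₂ p) (τ₂ p) = 0
  c1 : ∀ p ∈ U, form (pd w₁ σ₁ p) (σ₂ p) = 0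
  c2 : ∀ p ∈ U, form (pd w₂ σ₁ p) (σ₂ p) = 0
  d1 : ∀ p ∈ U, form (pd w₁ τ₁ p) (τ₂ p) = 0
  d2 : ∀ p ∈ U, form (pd w₂ τ₁ p) (τ₂ p) = 0
  cv1 : ∀ p ∈ U, pd w₁ σ₁ p ∈ spanF σ₁ σ₂ p
  cv2 : ∀ p ∈ U, pd w₂ σ₂ p ∈ spanF σ₁ σ₂ p
  um1 : ∀ p ∈ U, pd w₂ σ₁ p ∉ spanF σ₁ σ₂ p
  um2 : ∀ p ∈ U, pd w₁ σ₂ p ∉ spanF σ₁ σ₂ p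
  s0ne : ∀ p ∈ U, σ₀ p ≠ 0
  meet : ∀ p ∈ U, spanF σ₁ σ₂ p ⊓ spanF τ₁ τ₂ p = Submodule.span ℝ ({σ₀ p} : Set V6)
  np1 : ∀ p ∈ U, σ₀ p ∉ Submodule.span ℝ ({σ₁ p} : Set V6)
  np2 : ∀ p ∈ U, σ₀ p ∉ Submodule.span ℝ ({σ₂ p} : Set V6)
  np3 : ∀ p ∈ U, σ₀ p ∉ Submodule.span ℝ ({τ₁ p} : Set V6)
  np4 : ∀ p ∈ U, σ₀ p ∉ Submodule.span ℝ ({τ₂ p} : Set V6)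

variable {U : Set (ℝ × ℝ)} {w₁ w₂ : ℝ × ℝ} {σ₁ σ₂ τ₁ τ₂ σ₀ : ℝ × ℝ → V6}

lemma indep_four {M : Type*} [AddCommGroup M] [Module ℝ M] {v : Fin 4 → M}
    (h : ∀ g : Fin 4 → ℝ, g 0 • v 0 + g 1 • v 1 + g 2 • v 2 + g 3 • v 3 = 0 →
      ∀ i, g i = 0) : LinearIndependent ℝ v := by
  rw [Fintype.linearIndependent_iff]
  intro g hg
  rw [Fin.sum_univ_four] at hg
  exact h g hg

lemma range_four {a b c d : V6} : Set.range ![a, b, c, d] = {a, b, c, d} := by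
  ext x
  simp only [Set.mem_range, Set.mem_insert_iff, Set.mem_singleton_iff]
  constructor
  · rintro ⟨i, rfl⟩
    fin_cases i <;> simp
  · rintro (rfl | rfl | rfl | rfl)
    exacts [⟨0, rfl⟩, ⟨1, rfl⟩, ⟨2, rfl⟩, ⟨3, rfl⟩]

def formL (y : V6) : V6 →ₗ[ℝ] ℝ where
  toFun x := form x y
  map_add' x z := form_add_left x z y
  map_smul' r x := by simpa using form_smul_left r x y

lemma form_J' (x y : V6) : form (J x) y = dt x y := by
  rw [form_comm, form_J, dt_comm]


namespace Pack

variable (P : Pack U w₁ w₂ σ₁ σ₂ τ₁ τ₂ σ₀)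
include P

lemma s0f : ∀ p ∈ U, σ₀ p ∈ spanF σ₁ σ₂ p := by
  intro p hp
  have : σ₀ p ∈ spanF σ₁ σ₂ p ⊓ spanF τ₁ τ₂ p := by
    rw [P.meet p hp]
    exact Submodule.mem_span_singleton_self _
  exact this.1

lemma s0fh : ∀ p ∈ U, σ₀ p ∈ spanF τ₁ τ₂ p := by
  intro p hp
  have : σ₀ p ∈ spanF σ₁ σ₂ p ⊓ spanF τ₁ τ₂ p := by
    rw [P.meet p hp]
    exact Submodule.mem_span_singleton_self _
  exact this.2

lemma notmem_of_np {p : ℝ × ℝ} (hp : p ∈ U) {x : V6} (hx0 : x ≠ 0)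
    (hxh : x ∈ spanF τ₁ τ₂ p) (hnp : σ₀ p ∉ Submodule.span ℝ ({x} : Set V6)) :
    x ∉ spanF σ₁ σ₂ p := by
  intro hxf
  have hmem : x ∈ Submodule.span ℝ ({σ₀ p} : Set V6) := by
    rw [← P.meet p hp]; exact ⟨hxf, hxh⟩
  rcases Submodule.mem_span_singleton.1 hmem with ⟨κ, hκ⟩
  have hκ0 : κ ≠ 0 := by
    intro h0; rw [h0, zero_smul] at hκ; exact hx0 hκ.symm
  apply hnp
  rw [Submodule.mem_span_singleton]
  exact ⟨κ⁻¹, by rw [← hκ, smul_smul, inv_mul_cancel₀ hκ0, one_smul]⟩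

lemma t1nf : ∀ p ∈ U, τ₁ p ∉ spanF σ₁ σ₂ p := fun p hp =>
  P.notmem_of_np hp (pair_ne_zero (P.indτ p hp)).1
    (Submodule.subset_span (by simp)) (P.np3 p hp)

lemma t2nf : ∀ p ∈ U, τ₂ p ∉ spanF σ₁ σ₂ p := fun p hp =>
  P.notmem_of_np hp (pair_ne_zero (P.indτ p hp)).2
    (Submodule.subset_span (by simp)) (P.np4 p hp)

end Pack

lemma form_comb4_right (ξ a b c d : V6) (r s t u : ℝ) :
    form ξ (r • a + s • b + t • c + u • d)
      = r * form ξ a + s * form ξ b + t * form ξ c + u * form ξ d := by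
  simp [form]; ring

lemma form_comb4_left (ξ a b c d : V6) (r s t u : ℝ) :
    form (r • a + s • b + t • c + u • d) ξ
      = r * form a ξ + s * form b ξ + t * form c ξ + u * form d ξ := by
  simp [form]; ring

lemma mem_span_quad {x a b c d : V6} :
    x ∈ Submodule.span ℝ ({a, b, c, d} : Set V6) ↔
      ∃ r s t u : ℝ, x = r • a + s • b + t • c + u • d := by
  constructor
  · intro hx
    rcases Submodule.mem_span_insert.1 hx with ⟨r, z, hz, rfl⟩
    rcases mem_span_triple.1 hz with ⟨s, t, u, rfl⟩
    exact ⟨r, s, t, u, by module⟩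
  · rintro ⟨r, s, t, u, rfl⟩
    have ha : a ∈ Submodule.span ℝ ({a, b, c, d} : Set V6) := Submodule.subset_span (by simp)
    have hb : b ∈ Submodule.span ℝ ({a, b, c, d} : Set V6) := Submodule.subset_span (by simp)
    have hc : c ∈ Submodule.span ℝ ({a, b, c, d} : Set V6) := Submodule.subset_span (by simp)
    have hd : d ∈ Submodule.span ℝ ({a, b, c, d} : Set V6) := Submodule.subset_span (by simp)
    exact Submodule.add_mem _ (Submodule.add_mem _ (Submodule.add_mem _
      (Submodule.smul_mem _ _ ha) (Submodule.smul_mem _ _ hb))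
      (Submodule.smul_mem _ _ hc)) (Submodule.smul_mem _ _ hd)

lemma perp_aux {U : Set (ℝ × ℝ)} (hU : IsOpen U) {w : ℝ × ℝ} {φ₁ φ₂ : ℝ × ℝ → V6}
    (s1 : ContDiffOn ℝ (⊤ : ℕ∞) φ₁ U) (s2 : ContDiffOn ℝ (⊤ : ℕ∞) φ₂ U)
    (i11 : ∀ p ∈ U, form (φ₁ p) (φ₁ p) = 0) (i12 : ∀ p ∈ U, form (φ₁ p) (φ₂ p) = 0)
    (i22 : ∀ p ∈ U, form (φ₂ p) (φ₂ p) = 0)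
    (c12 : ∀ p ∈ U, form (pd w φ₁ p) (φ₂ p) = 0) :
    ∀ q ∈ U, form (pd w φ₁ q) (φ₁ q) = 0 ∧ form (pd w φ₁ q) (φ₂ q) = 0 ∧
      form (pd w φ₂ q) (φ₁ q) = 0 ∧ form (pd w φ₂ q) (φ₂ q) = 0 := by
  intro q hq
  have df1 := diffAt s1 hU hq
  have df2 := diffAt s2 hU hq
  have A := deriv_form_zero hU hq df1 df1 i11 w
  have B := c12 q hq
  have C := deriv_form_zero hU hq df1 df2 i12 w
  have D := deriv_form_zero hU hq df2 df2 i22 w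
  have hB : form (fderiv ℝ φ₁ q w) (φ₂ q) = 0 := B
  refine ⟨?_, B, ?_, ?_⟩
  · show form (fderiv ℝ φ₁ q w) (φ₁ q) = 0
    have hc := form_comm (φ₁ q) (fderiv ℝ φ₁ q w)
    linarith [A]
  · show form (fderiv ℝ φ₂ q w) (φ₁ q) = 0
    have hc := form_comm (φ₁ q) (fderiv ℝ φ₂ q w)
    linarith [C]
  · show form (fderiv ℝ φ₂ q w) (φ₂ q) = 0
    have hc := form_comm (φ₂ q) (fderiv ℝ φ₂ q w)
    linarith [D]

lemma g1_aux {U : Set (ℝ × ℝ)} (hU : IsOpen U) {w₁ w₂ : ℝ × ℝ} {φ₁ φ₂ : ℝ × ℝ → V6}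
    (s1 : ContDiffOn ℝ (⊤ : ℕ∞) φ₁ U) (s2 : ContDiffOn ℝ (⊤ : ℕ∞) φ₂ U)
    (i11 : ∀ p ∈ U, form (φ₁ p) (φ₁ p) = 0) (i12 : ∀ p ∈ U, form (φ₁ p) (φ₂ p) = 0)
    (i22 : ∀ p ∈ U, form (φ₂ p) (φ₂ p) = 0)
    (c1 : ∀ p ∈ U, form (pd w₁ φ₁ p) (φ₂ p) = 0) (c2 : ∀ p ∈ U, form (pd w₂ φ₁ p) (φ₂ p) = 0)
    (cv2 : ∀ p ∈ U, pd w₂ φ₂ p ∈ Submodule.span ℝ ({φ₁ p, φ₂ p} : Set V6)) :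
    ∀ q ∈ U, form (pd w₂ φ₁ q) (pd w₁ φ₂ q) = 0 := by
  intro q hq
  have h1 := deriv_form_zero hU hq (pd_diffAt s1 hU hq w₂) (diffAt s2 hU hq) c2 w₁
  have h2 := deriv_form_zero hU hq (pd_diffAt s1 hU hq w₁) (diffAt s2 hU hq) c1 w₂
  have hperp := perp_aux hU s1 s2 i11 i12 i22 c1 q hq
  have h3 : form (pd w₁ φ₁ q) (pd w₂ φ₂ q) = 0 :=
    perp_span_pair (cv2 q hq) hperp.1 hperp.2.1
  have hswz : fderiv ℝ (pd w₂ φ₁) q w₁ = fderiv ℝ (pd w₁ φ₁) q w₂ :=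
    pd_comm s1 hU hq w₁ w₂
  show form (fderiv ℝ φ₁ q w₂) (fderiv ℝ φ₂ q w₁) = 0
  have h2' : form (fderiv ℝ (pd w₁ φ₁) q w₂) (φ₂ q) = 0 := by
    have : form (pd w₁ φ₁ q) (fderiv ℝ φ₂ q w₂) = 0 := h3
    linarith [h2]
  have h1' : form (fderiv ℝ (pd w₂ φ₁) q w₁) (φ₂ q) = 0 := by rw [hswz]; exact h2'
  have h1'' : form (pd w₂ φ₁ q) (fderiv ℝ φ₂ q w₁) = 0 := by linarith [h1]
  exact h1''

lemma form_comb3_left (a b c ξ : V6) (x y z : ℝ) :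
    form (x • a + y • b + z • c) ξ = x * form a ξ + y * form b ξ + z * form c ξ := by
  simp [form]; ring

lemma form_delta (t s1 t1 ps ξ : V6) (x y z : ℝ) :
    form (t - (x • s1 + y • t1 + z • ps)) ξ
      = form t ξ - x * form s1 ξ - y * form t1 ξ - z * form ps ξ := by
  simp [form]; ring

lemma form_comb6_left (a b c d e f ξ : V6) (g0 g1 g2 g3 g4 g5 : ℝ) :
    form (g0 • a + g1 • b + g2 • c + g3 • d + g4 • e + g5 • f) ξ
      = g0 * form a ξ + g1 * form b ξ + g2 * form c ξ + g3 * form d ξ + g4 * form e ξ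
        + g5 * form f ξ := by
  simp [form]; ring

lemma indep_six {v : Fin 6 → V6}
    (h : ∀ g : Fin 6 → ℝ, g 0 • v 0 + g 1 • v 1 + g 2 • v 2 + g 3 • v 3 + g 4 • v 4
      + g 5 • v 5 = 0 → ∀ i, g i = 0) : LinearIndependent ℝ v := by
  rw [Fintype.linearIndependent_iff]
  intro g hg
  rw [Fin.sum_univ_six] at hg
  exact h g hg

lemma eq_zero_of_perp_six {v : Fin 6 → V6} {δ : V6}
    (hind : LinearIndependent ℝ v) (hperp : ∀ i, form δ (v i) = 0) : δ = 0 := by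
  have hspan : Submodule.span ℝ (Set.range v) = ⊤ :=
    hind.span_eq_top_of_card_eq_finrank (by simp)
  have hall : ∀ z : V6, form δ z = 0 := by
    intro z
    have hz : z ∈ Submodule.span ℝ (Set.range v) := by rw [hspan]; trivial
    induction hz using Submodule.span_induction with
    | mem x hx => rcases hx with ⟨i, rfl⟩; exact hperp i
    | zero => exact form_zero_right δ
    | add x y hx' hy' hx hy => rw [form_add_right, hx, hy]; ring
    | smul r x hx' hx => rw [form_smul_right, hx]; ring
  apply eq_zero_of_dt_self
  rw [← form_J]
  exact hall (J δ)

lemma pair_ne_zero' {M : Type*} [AddCommGroup M] [Module ℝ M] {x y : M}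
    (h : LinearIndependent ℝ ![x, y]) : x ≠ 0 ∧ y ≠ 0 := by
  rw [LinearIndependent.pair_iff] at h
  constructor
  · intro h0
    exact one_ne_zero (h 1 0 (by simp [h0])).1
  · intro h0
    exact one_ne_zero (h 0 1 (by simp [h0])).2

lemma det_ne_of_indep {x y : ℝ × ℝ} (h : LinearIndependent ℝ ![x, y]) :
    x.1 * y.2 - x.2 * y.1 ≠ 0 := by
  intro hdet
  have hx0 := (pair_ne_zero' h).1
  rw [LinearIndependent.pair_iff] at h
  have c1 : y.1 • x + (-x.1) • y = 0 := by
    apply Prod.ext <;> simp <;> nlinarith [hdet]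
  have c2 : y.2 • x + (-x.2) • y = 0 := by
    apply Prod.ext <;> simp <;> nlinarith [hdet]
  have h1 := h _ _ c1
  have h2 := h _ _ c2
  apply hx0
  have e1 : x.1 = 0 := by have := h1.2; linarith [neg_eq_zero.1 this]
  have e2 : x.2 = 0 := by have := h2.2; linarith [neg_eq_zero.1 this]
  exact Prod.ext e1 e2

lemma solve2 {x y : ℝ × ℝ} (h : x.1 * y.2 - x.2 * y.1 ≠ 0) (z : ℝ × ℝ) :
    ∃ α β : ℝ, z = α • x + β • y := by
  refine ⟨(z.1 * y.2 - z.2 * y.1) / (x.1 * y.2 - x.2 * y.1),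
    (x.1 * z.2 - x.2 * z.1) / (x.1 * y.2 - x.2 * y.1), ?_⟩
  apply Prod.ext <;> simp only [Prod.fst_add, Prod.snd_add, Prod.smul_fst, Prod.smul_snd, smul_eq_mul] <;>
    rw [div_mul_eq_mul_div, div_mul_eq_mul_div, ← add_div, eq_div_iff h] <;> ring

lemma fderiv_dir (σ : ℝ × ℝ → V6) (p : ℝ × ℝ) (x : ℝ × ℝ) :
    fderiv ℝ σ p x = x.1 • pd (1, 0) σ p + x.2 • pd (0, 1) σ p := by
  have hx : x = x.1 • ((1 : ℝ), (0 : ℝ)) + x.2 • ((0 : ℝ), (1 : ℝ)) := by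
    apply Prod.ext <;> simp
  conv_lhs => rw [hx]
  rw [map_add, map_smul, map_smul]
  rfl

lemma perp_span_triple' {ξ a b c z : V6} (hz : z ∈ Submodule.span ℝ ({a, b, c} : Set V6))
    (ha : form a ξ = 0) (hb : form b ξ = 0) (hc : form c ξ = 0) : form z ξ = 0 := by
  rcases mem_span_triple.1 hz with ⟨r, s, t, rfl⟩
  rw [form_comb3_left, ha, hb, hc]; ring

namespace Pack

variable (P : Pack U w₁ w₂ σ₁ σ₂ τ₁ τ₂ σ₀)
include P

lemma swap : Pack U w₂ w₁ σ₂ σ₁ τ₂ τ₁ σ₀ := by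
  have pσ1 := perp_aux P.hU P.sm1 P.sm2 P.i11 P.i12 P.i22 P.c1
  have pσ2 := perp_aux P.hU P.sm1 P.sm2 P.i11 P.i12 P.i22 P.c2
  have pτ1 := perp_aux P.hU P.st1 P.st2 P.j11 P.j12 P.j22 P.d1
  have pτ2 := perp_aux P.hU P.st1 P.st2 P.j11 P.j12 P.j22 P.d2
  refine ⟨P.hU, P.sm2, P.sm1, P.st2, P.st1, P.sm0,
    fun p hp => pair_swap (P.ind p hp), fun p hp => pair_swap (P.indτ p hp),
    P.i22, fun p hp => (form_comm _ _).trans (P.i12 p hp) , P.i11,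
    P.j22, fun p hp => (form_comm _ _).trans (P.j12 p hp), P.j11,
    fun p hp => (pσ2 p hp).2.2.1, fun p hp => (pσ1 p hp).2.2.1,
    fun p hp => (pτ2 p hp).2.2.1, fun p hp => (pτ1 p hp).2.2.1,
    ?_, ?_, ?_, ?_, P.s0ne, ?_, P.np2, P.np1, P.np4, P.np3⟩
  · intro p hp; rw [spanF_comm]; exact P.cv2 p hp
  · intro p hp; rw [spanF_comm]; exact P.cv1 p hp
  · intro p hp; rw [spanF_comm]; exact P.um2 p hp
  · intro p hp; rw [spanF_comm]; exact P.um1 p hp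
  · intro p hp; rw [spanF_comm σ₁ σ₂, spanF_comm τ₁ τ₂]; exact P.meet p hp

lemma s0spec : ∀ p ∈ U, σ₀ p = cra σ₁ σ₂ σ₀ p • σ₁ p + cra σ₂ σ₁ σ₀ p • σ₂ p :=
  fun p hp => cra_spec (P.ind p hp) (P.s0f p hp)

lemma s0specτ : ∀ p ∈ U, σ₀ p = cra τ₁ τ₂ σ₀ p • τ₁ p + cra τ₂ τ₁ σ₀ p • τ₂ p :=
  fun p hp => cra_spec (P.indτ p hp) (P.s0fh p hp)

lemma a_ne : ∀ p ∈ U, cra σ₁ σ₂ σ₀ p ≠ 0 := by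
  intro p hp h0
  apply P.np2 p hp
  rw [Submodule.mem_span_singleton]
  exact ⟨cra σ₂ σ₁ σ₀ p, by rw [P.s0spec p hp, h0, zero_smul, zero_add]⟩

lemma b_ne : ∀ p ∈ U, cra σ₂ σ₁ σ₀ p ≠ 0 := by
  intro p hp h0
  apply P.np1 p hp
  rw [Submodule.mem_span_singleton]
  exact ⟨cra σ₁ σ₂ σ₀ p, by rw [P.s0spec p hp, h0, zero_smul, add_zero]⟩

lemma c_ne : ∀ p ∈ U, cra τ₁ τ₂ σ₀ p ≠ 0 := by
  intro p hp h0
  apply P.np4 p hp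
  rw [Submodule.mem_span_singleton]
  exact ⟨cra τ₂ τ₁ σ₀ p, by rw [P.s0specτ p hp, h0, zero_smul, zero_add]⟩

lemma d_ne : ∀ p ∈ U, cra τ₂ τ₁ σ₀ p ≠ 0 := by
  intro p hp h0
  apply P.np3 p hp
  rw [Submodule.mem_span_singleton]
  exact ⟨cra τ₁ τ₂ σ₀ p, by rw [P.s0specτ p hp, h0, zero_smul, add_zero]⟩

lemma s0perp : ∀ p ∈ U, form (σ₀ p) (σ₁ p) = 0 ∧ form (σ₀ p) (σ₂ p) = 0 ∧
    form (σ₀ p) (τ₁ p) = 0 ∧ form (σ₀ p) (τ₂ p) = 0 ∧ form (σ₀ p) (σ₀ p) = 0 := by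
  intro p hp
  have h1 : form (σ₀ p) (σ₁ p) = 0 :=
    perp_span_pair' (P.s0f p hp) (P.i11 p hp) ((form_comm _ _).trans (P.i12 p hp))
  have h2 : form (σ₀ p) (σ₂ p) = 0 :=
    perp_span_pair' (P.s0f p hp) (P.i12 p hp) (P.i22 p hp)
  have h3 : form (σ₀ p) (τ₁ p) = 0 :=
    perp_span_pair' (P.s0fh p hp) (P.j11 p hp) ((form_comm _ _).trans (P.j12 p hp))
  have h4 : form (σ₀ p) (τ₂ p) = 0 :=
    perp_span_pair' (P.s0fh p hp) (P.j12 p hp) (P.j22 p hp)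
  exact ⟨h1, h2, h3, h4, perp_span_pair (P.s0f p hp) h1 h2⟩

lemma d0 : ∀ q ∈ U, ∀ w : ℝ × ℝ, ∃ r s : ℝ, pd w σ₀ q
    = r • σ₁ q + s • σ₂ q + cra σ₁ σ₂ σ₀ q • pd w σ₁ q + cra σ₂ σ₁ σ₀ q • pd w σ₂ q := by
  intro q hq w
  have h1 := diffAt P.sm1 P.hU hq
  have h2 := diffAt P.sm2 P.hU hq
  have h0 := diffAt P.sm0 P.hU hq
  exact pd_decomp P.hU hq (cra_diffAt h1 h2 h0 (P.ind q hq))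
    (cra_diffAt h2 h1 h0 (pair_swap (P.ind q hq))) h1 h2 P.s0spec w

lemma d0τ : ∀ q ∈ U, ∀ w : ℝ × ℝ, ∃ r s : ℝ, pd w σ₀ q
    = r • τ₁ q + s • τ₂ q + cra τ₁ τ₂ σ₀ q • pd w τ₁ q + cra τ₂ τ₁ σ₀ q • pd w τ₂ q := by
  intro q hq w
  have h1 := diffAt P.st1 P.hU hq
  have h2 := diffAt P.st2 P.hU hq
  have h0 := diffAt P.sm0 P.hU hq
  exact pd_decomp P.hU hq (cra_diffAt h1 h2 h0 (P.indτ q hq))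
    (cra_diffAt h2 h1 h0 (pair_swap (P.indτ q hq))) h1 h2 P.s0specτ w

lemma pd0perp {w : ℝ × ℝ} (hw : w = w₁ ∨ w = w₂) : ∀ q ∈ U,
    form (pd w σ₀ q) (σ₁ q) = 0 ∧ form (pd w σ₀ q) (σ₂ q) = 0 ∧
    form (pd w σ₀ q) (τ₁ q) = 0 ∧ form (pd w σ₀ q) (τ₂ q) = 0 ∧
    form (pd w σ₀ q) (σ₀ q) = 0 := by
  intro q hq
  have hperpσ : form (pd w σ₁ q) (σ₁ q) = 0 ∧ form (pd w σ₁ q) (σ₂ q) = 0 ∧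
      form (pd w σ₂ q) (σ₁ q) = 0 ∧ form (pd w σ₂ q) (σ₂ q) = 0 := by
    rcases hw with rfl | rfl
    · exact perp_aux P.hU P.sm1 P.sm2 P.i11 P.i12 P.i22 P.c1 q hq
    · exact perp_aux P.hU P.sm1 P.sm2 P.i11 P.i12 P.i22 P.c2 q hq
  have hperpτ : form (pd w τ₁ q) (τ₁ q) = 0 ∧ form (pd w τ₁ q) (τ₂ q) = 0 ∧
      form (pd w τ₂ q) (τ₁ q) = 0 ∧ form (pd w τ₂ q) (τ₂ q) = 0 := by
    rcases hw with rfl | rfl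
    · exact perp_aux P.hU P.st1 P.st2 P.j11 P.j12 P.j22 P.d1 q hq
    · exact perp_aux P.hU P.st1 P.st2 P.j11 P.j12 P.j22 P.d2 q hq
  obtain ⟨r, s, hd⟩ := P.d0 q hq w
  obtain ⟨r', s', hdτ⟩ := P.d0τ q hq w
  have h1 : form (pd w σ₀ q) (σ₁ q) = 0 := by
    rw [hd, form_comb4_left, P.i11 q hq, (form_comm _ _).trans (P.i12 q hq),
      hperpσ.1, hperpσ.2.2.1]; ring
  have h2 : form (pd w σ₀ q) (σ₂ q) = 0 := by
    rw [hd, form_comb4_left, P.i12 q hq, P.i22 q hq, hperpσ.2.1, hperpσ.2.2.2]; ring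
  have h3 : form (pd w σ₀ q) (τ₁ q) = 0 := by
    rw [hdτ, form_comb4_left, P.j11 q hq, (form_comm _ _).trans (P.j12 q hq),
      hperpτ.1, hperpτ.2.2.1]; ring
  have h4 : form (pd w σ₀ q) (τ₂ q) = 0 := by
    rw [hdτ, form_comb4_left, P.j12 q hq, P.j22 q hq, hperpτ.2.1, hperpτ.2.2.2]; ring
  exact ⟨h1, h2, h3, h4, perp_span_pair (P.s0f q hq) h1 h2⟩

lemma g1 : ∀ q ∈ U, form (pd w₂ σ₁ q) (pd w₁ σ₂ q) = 0 :=
  g1_aux P.hU P.sm1 P.sm2 P.i11 P.i12 P.i22 P.c1 P.c2 P.cv2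

lemma j0 : ∀ q ∈ U, form (pd w₁ σ₀ q) (pd w₂ σ₀ q) = 0 := by
  intro q hq
  have hfun1 : ∀ p ∈ U, form (σ₀ p) (pd w₂ σ₀ p) = 0 := fun p hp =>
    (form_comm _ _).trans ((P.pd0perp (Or.inr rfl) p hp).2.2.2.2)
  have hfun2 : ∀ p ∈ U, form (σ₁ p) (pd w₂ σ₀ p) = 0 := fun p hp =>
    (form_comm _ _).trans ((P.pd0perp (Or.inr rfl) p hp).1)
  have hfun3 : ∀ p ∈ U, form (σ₂ p) (pd w₁ σ₀ p) = 0 := fun p hp =>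
    (form_comm _ _).trans ((P.pd0perp (Or.inl rfl) p hp).2.1)
  have df0 := diffAt P.sm0 P.hU hq
  have df1 := diffAt P.sm1 P.hU hq
  have df2 := diffAt P.sm2 P.hU hq
  have h := deriv_form_zero P.hU hq df0 (pd_diffAt P.sm0 P.hU hq w₂) hfun1 w₁
  have hz1 := deriv_form_zero P.hU hq df1 (pd_diffAt P.sm0 P.hU hq w₂) hfun2 w₁
  have hz2 := deriv_form_zero P.hU hq df2 (pd_diffAt P.sm0 P.hU hq w₁) hfun3 w₂
  have e1 : form (fderiv ℝ σ₁ q w₁) (pd w₂ σ₀ q) = 0 :=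
    perp_span_pair' (P.cv1 q hq) (hfun2 q hq)
      ((form_comm _ _).trans ((P.pd0perp (Or.inr rfl) q hq).2.1))
  have e2 : form (fderiv ℝ σ₂ q w₂) (pd w₁ σ₀ q) = 0 :=
    perp_span_pair' (P.cv2 q hq) ((form_comm _ _).trans ((P.pd0perp (Or.inl rfl) q hq).1))
      (hfun3 q hq)
  have hZ1 : form (σ₁ q) (fderiv ℝ (pd w₂ σ₀) q w₁) = 0 := by linarith [hz1, e1]
  have hZ2 : form (σ₂ q) (fderiv ℝ (pd w₁ σ₀) q w₂) = 0 := by linarith [hz2, e2]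
  have hsw : fderiv ℝ (pd w₁ σ₀) q w₂ = fderiv ℝ (pd w₂ σ₀) q w₁ :=
    pd_comm P.sm0 P.hU hq w₂ w₁
  rw [hsw] at hZ2
  have hZ0 : form (σ₀ q) (fderiv ℝ (pd w₂ σ₀) q w₁) = 0 := by
    rw [P.s0spec q hq, form_comb2_left, hZ1, hZ2]; ring
  show form (fderiv ℝ σ₀ q w₁) (pd w₂ σ₀ q) = 0
  linarith [h, hZ0]

lemma m0 : ∀ q ∈ U, form (pd w₂ σ₁ q) (pd w₁ σ₀ q) = 0 := by
  intro q hq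
  obtain ⟨r, s, hd⟩ := P.d0 q hq w₁
  have hperp2 := perp_aux P.hU P.sm1 P.sm2 P.i11 P.i12 P.i22 P.c2 q hq
  have hp3 : form (pd w₂ σ₁ q) (pd w₁ σ₁ q) = 0 :=
    perp_span_pair (P.cv1 q hq) hperp2.1 hperp2.2.1
  rw [hd, form_comb4_right, hperp2.1, hperp2.2.1, hp3, P.g1 q hq]; ring

lemma pos1 : ∀ q ∈ U, 0 < form (pd w₁ σ₀ q) (pd w₁ σ₀ q) := by
  intro q hq
  have hperp := P.pd0perp (Or.inl rfl) q hq
  apply perp_pos (P.ind q hq) (P.i11 q hq) (P.i12 q hq) (P.i22 q hq) hperp.1 hperp.2.1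
  intro hmem
  obtain ⟨r, s, hd⟩ := P.d0 q hq w₁
  apply P.um2 q hq
  have h1 : cra σ₂ σ₁ σ₀ q • pd w₁ σ₂ q
      = pd w₁ σ₀ q - r • σ₁ q - s • σ₂ q - cra σ₁ σ₂ σ₀ q • pd w₁ σ₁ q := by
    rw [hd]; module
  have hmem2 : cra σ₂ σ₁ σ₀ q • pd w₁ σ₂ q ∈ spanF σ₁ σ₂ q := by
    rw [h1]
    refine Submodule.sub_mem _ (Submodule.sub_mem _ (Submodule.sub_mem _ hmem ?_) ?_) ?_
    · exact Submodule.smul_mem _ _ (Submodule.subset_span (by simp))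
    · exact Submodule.smul_mem _ _ (Submodule.subset_span (by simp))
    · exact Submodule.smul_mem _ _ (P.cv1 q hq)
  exact (Submodule.smul_mem_iff _ (P.b_ne q hq)).1 hmem2

lemma e_ne : ∀ q ∈ U, form (σ₁ q) (τ₁ q) ≠ 0 := by
  intro q hq he0
  have hσne := pair_ne_zero (P.ind q hq)
  apply iso3_false (z₁ := σ₀ q) (z₂ := σ₁ q) (z₃ := τ₁ q) ?_
    (P.s0perp q hq).2.2.2.2 (P.s0perp q hq).1 (P.s0perp q hq).2.2.1
    (P.i11 q hq) he0 (P.j11 q hq)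
  intro α β γ hcomb
  have hγ : γ = 0 := by
    by_contra hγ
    apply P.t1nf q hq
    have hmem : γ • τ₁ q ∈ spanF σ₁ σ₂ q := by
      have hco : γ • τ₁ q = -(α • σ₀ q) - β • σ₁ q := by
        linear_combination (norm := module) hcomb
      rw [hco]
      refine Submodule.sub_mem _ (Submodule.neg_mem _ ?_) ?_
      · exact Submodule.smul_mem _ _ (P.s0f q hq)
      · exact Submodule.smul_mem _ _ (Submodule.subset_span (by simp))
    exact (Submodule.smul_mem_iff _ hγ).1 hmem
  have hα : α = 0 := by
    by_contra hα
    apply P.np1 q hq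
    rw [Submodule.mem_span_singleton]
    rw [hγ, zero_smul, add_zero] at hcomb
    have h' : α • σ₀ q = -(β • σ₁ q) := by linear_combination (norm := module) hcomb
    have hs : σ₀ q = (α⁻¹ * -β) • σ₁ q := by
      calc σ₀ q = α⁻¹ • (α • σ₀ q) := by rw [smul_smul, inv_mul_cancel₀ hα, one_smul]
        _ = α⁻¹ • (-(β • σ₁ q)) := by rw [h']
        _ = (α⁻¹ * -β) • σ₁ q := by rw [← neg_smul, smul_smul]
    exact ⟨α⁻¹ * -β, hs.symm⟩
  have hβ : β = 0 := by
    rw [hγ, zero_smul, add_zero, hα, zero_smul, zero_add] at hcomb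
    exact (smul_eq_zero.1 hcomb).resolve_right hσne.1
  exact ⟨hα, hβ, hγ⟩


lemma forward_core (hc1 : ∀ p ∈ U, pd w₁ τ₁ p ∈ spanF τ₁ τ₂ p)
    (hc2 : ∀ p ∈ U, pd w₂ τ₂ p ∈ spanF τ₁ τ₂ p) :
    ∀ q ∈ U, pd w₂ τ₁ q ∈ Submodule.span ℝ ({σ₁ q, τ₁ q, pd w₂ σ₁ q} : Set V6) := by
  have pσ1 := perp_aux P.hU P.sm1 P.sm2 P.i11 P.i12 P.i22 P.c1
  have pσ2 := perp_aux P.hU P.sm1 P.sm2 P.i11 P.i12 P.i22 P.c2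
  have pτ1 := perp_aux P.hU P.st1 P.st2 P.j11 P.j12 P.j22 P.d1
  have pτ2 := perp_aux P.hU P.st1 P.st2 P.j11 P.j12 P.j22 P.d2
  have hg1τ : ∀ p ∈ U, form (pd w₂ τ₁ p) (pd w₁ τ₂ p) = 0 :=
    g1_aux P.hU P.st1 P.st2 P.j11 P.j12 P.j22 P.d1 P.d2 hc2
  -- pd w₂ τ₁ ⟂ f̂ pointwise, and ⟂ σ₀
  have hperpfh : ∀ p ∈ U, ∀ z ∈ spanF τ₁ τ₂ p, form (pd w₂ τ₁ p) z = 0 := fun p hp z hz =>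
    perp_span_pair hz (pτ2 p hp).1 (pτ2 p hp).2.1
  -- (l) : ⟨pd w₂ τ₁, pd w₁ σ₀⟩ = 0 on U
  have hlfun : ∀ p ∈ U, form (pd w₂ τ₁ p) (pd w₁ σ₀ p) = 0 := by
    intro p hp
    obtain ⟨r, s, hd⟩ := P.d0τ p hp w₁
    rw [hd, form_comb4_right, (pτ2 p hp).1, P.d2 p hp,
      hperpfh p hp _ (hc1 p hp), hg1τ p hp]
    ring
  -- function facts on U for T1
  have fσ1 : ∀ p ∈ U, form (σ₁ p) (pd w₁ σ₀ p) = 0 := fun p hp =>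
    (form_comm _ _).trans ((P.pd0perp (Or.inl rfl) p hp).1)
  have fτ1 : ∀ p ∈ U, form (τ₁ p) (pd w₁ σ₀ p) = 0 := fun p hp =>
    (form_comm _ _).trans ((P.pd0perp (Or.inl rfl) p hp).2.2.1)
  have fs0 : ∀ p ∈ U, form (σ₀ p) (pd w₁ σ₀ p) = 0 := fun p hp =>
    (form_comm _ _).trans ((P.pd0perp (Or.inl rfl) p hp).2.2.2.2)
  intro q hq
  have hq1 : ∀ z ∈ spanF σ₁ σ₂ q, form (pd w₁ σ₀ q) z = 0 := fun z hz =>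
    perp_span_pair hz ((P.pd0perp (Or.inl rfl) q hq).1) ((P.pd0perp (Or.inl rfl) q hq).2.1)
  have hq2 : ∀ z ∈ spanF σ₁ σ₂ q, form (pd w₂ σ₀ q) z = 0 := fun z hz =>
    perp_span_pair hz ((P.pd0perp (Or.inr rfl) q hq).1) ((P.pd0perp (Or.inr rfl) q hq).2.1)
  have hq1τ : ∀ z ∈ spanF τ₁ τ₂ q, form (pd w₁ σ₀ q) z = 0 := fun z hz =>
    perp_span_pair hz ((P.pd0perp (Or.inl rfl) q hq).2.2.1) ((P.pd0perp (Or.inl rfl) q hq).2.2.2.1)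
  have hq2τ : ∀ z ∈ spanF τ₁ τ₂ q, form (pd w₂ σ₀ q) z = 0 := fun z hz =>
    perp_span_pair hz ((P.pd0perp (Or.inr rfl) q hq).2.2.1) ((P.pd0perp (Or.inr rfl) q hq).2.2.2.1)
  -- second derivative η := ∂₁∂₁σ₀
  set η : V6 := fderiv ℝ (pd w₁ σ₀) q w₁ with hηdef
  -- A1 : ⟨σ₁, η⟩ = 0
  have A1 : form (σ₁ q) η = 0 := by
    have h := deriv_form_zero P.hU hq (diffAt P.sm1 P.hU hq) (pd_diffAt P.sm0 P.hU hq w₁) fσ1 w₁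
    have h1 : form (fderiv ℝ σ₁ q w₁) (pd w₁ σ₀ q) = 0 :=
      (form_comm _ _).trans (hq1 _ (P.cv1 q hq))
    linarith [h]
  -- A2 : ⟨τ₁, η⟩ = 0
  have A2 : form (τ₁ q) η = 0 := by
    have h := deriv_form_zero P.hU hq (diffAt P.st1 P.hU hq) (pd_diffAt P.sm0 P.hU hq w₁) fτ1 w₁
    have h1 : form (fderiv ℝ τ₁ q w₁) (pd w₁ σ₀ q) = 0 :=
      (form_comm _ _).trans (hq1τ _ (hc1 q hq))
    linarith [h]
  -- A0 : ⟨σ₀, η⟩ = -⟨∂₁σ₀, ∂₁σ₀⟩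
  have A0 : form (σ₀ q) η = -(form (pd w₁ σ₀ q) (pd w₁ σ₀ q)) := by
    have h := deriv_form_zero P.hU hq (diffAt P.sm0 P.hU hq) (pd_diffAt P.sm0 P.hU hq w₁) fs0 w₁
    have : form (fderiv ℝ σ₀ q w₁) (pd w₁ σ₀ q) = form (pd w₁ σ₀ q) (pd w₁ σ₀ q) := rfl
    linarith [h]
  -- A3 : ⟨pd w₂ σ₁, η⟩ = 0
  set Z' : V6 := fderiv ℝ (pd w₂ σ₁) q w₁ with hZ'def
  have B1 : form Z' (σ₁ q) = 0 := by
    have hfun : ∀ p ∈ U, form (pd w₂ σ₁ p) (σ₁ p) = 0 := fun p hp => (pσ2 p hp).1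
    have h := deriv_form_zero P.hU hq (pd_diffAt P.sm1 P.hU hq w₂) (diffAt P.sm1 P.hU hq) hfun w₁
    have h1 : form (pd w₂ σ₁ q) (fderiv ℝ σ₁ q w₁) = 0 :=
      perp_span_pair (P.cv1 q hq) (pσ2 q hq).1 (pσ2 q hq).2.1
    linarith [h]
  have B2 : form Z' (σ₂ q) = 0 := by
    have h := deriv_form_zero P.hU hq (pd_diffAt P.sm1 P.hU hq w₂) (diffAt P.sm2 P.hU hq) P.c2 w₁
    have h1 : form (pd w₂ σ₁ q) (fderiv ℝ σ₂ q w₁) = 0 := P.g1 q hq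
    linarith [h]
  have B3 : form Z' (pd w₁ σ₁ q) = 0 := perp_span_pair (P.cv1 q hq) B1 B2
  have B4 : form Z' (pd w₁ σ₂ q) = 0 := by
    have hfun : ∀ p ∈ U, form (pd w₁ σ₁ p) (pd w₁ σ₂ p) = 0 := fun p hp =>
      perp_span_pair' (P.cv1 p hp) ((form_comm _ _).trans (pσ1 p hp).2.2.1)
        ((form_comm _ _).trans (pσ1 p hp).2.2.2)
    have h := deriv_form_zero P.hU hq (pd_diffAt P.sm1 P.hU hq w₁)
      (pd_diffAt P.sm2 P.hU hq w₁) hfun w₂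
    have C1 : form (σ₁ q) (fderiv ℝ (pd w₁ σ₂) q w₂) = 0 := by
      have hfun1 : ∀ p ∈ U, form (σ₁ p) (pd w₁ σ₂ p) = 0 := fun p hp =>
        (form_comm _ _).trans (pσ1 p hp).2.2.1
      have h' := deriv_form_zero P.hU hq (diffAt P.sm1 P.hU hq)
        (pd_diffAt P.sm2 P.hU hq w₁) hfun1 w₂
      have h1 : form (fderiv ℝ σ₁ q w₂) (pd w₁ σ₂ q) = 0 := P.g1 q hq
      linarith [h']
    have C2 : form (σ₂ q) (fderiv ℝ (pd w₁ σ₂) q w₂) = 0 := by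
      have hfun2 : ∀ p ∈ U, form (σ₂ p) (pd w₁ σ₂ p) = 0 := fun p hp =>
        (form_comm _ _).trans (pσ1 p hp).2.2.2
      have h' := deriv_form_zero P.hU hq (diffAt P.sm2 P.hU hq)
        (pd_diffAt P.sm2 P.hU hq w₁) hfun2 w₂
      have h1 : form (fderiv ℝ σ₂ q w₂) (pd w₁ σ₂ q) = 0 :=
        perp_span_pair' (P.cv2 q hq) ((form_comm _ _).trans (pσ1 q hq).2.2.1)
          ((form_comm _ _).trans (pσ1 q hq).2.2.2)
      linarith [h']
    have h2 : form (pd w₁ σ₁ q) (fderiv ℝ (pd w₁ σ₂) q w₂) = 0 :=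
      perp_span_pair' (P.cv1 q hq) C1 C2
    have hsw : fderiv ℝ (pd w₁ σ₁) q w₂ = Z' := pd_comm P.sm1 P.hU hq w₂ w₁
    have h3 : form (fderiv ℝ (pd w₁ σ₁) q w₂) (pd w₁ σ₂ q) = 0 := by linarith [h]
    rw [hsw] at h3
    exact h3
  have A3 : form (pd w₂ σ₁ q) η = 0 := by
    have h := deriv_form_zero P.hU hq (pd_diffAt P.sm1 P.hU hq w₂)
      (pd_diffAt P.sm0 P.hU hq w₁) P.m0 w₁
    obtain ⟨r, s, hd⟩ := P.d0 q hq w₁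
    have h1 : form Z' (pd w₁ σ₀ q) = 0 := by
      show form Z' (fderiv ℝ σ₀ q w₁) = 0
      rw [show fderiv ℝ σ₀ q w₁ = pd w₁ σ₀ q from rfl, hd, form_comb4_right, B1, B2, B3, B4]
      ring
    linarith [h, h1]
  -- A4 : ⟨pd w₂ τ₁, η⟩ = 0
  set Z'' : V6 := fderiv ℝ (pd w₂ τ₁) q w₁ with hZ''def
  have D1 : form Z'' (τ₁ q) = 0 := by
    have hfun : ∀ p ∈ U, form (pd w₂ τ₁ p) (τ₁ p) = 0 := fun p hp => (pτ2 p hp).1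
    have h := deriv_form_zero P.hU hq (pd_diffAt P.st1 P.hU hq w₂) (diffAt P.st1 P.hU hq) hfun w₁
    have h1 : form (pd w₂ τ₁ q) (fderiv ℝ τ₁ q w₁) = 0 := hperpfh q hq _ (hc1 q hq)
    linarith [h]
  have D2 : form Z'' (τ₂ q) = 0 := by
    have h := deriv_form_zero P.hU hq (pd_diffAt P.st1 P.hU hq w₂) (diffAt P.st2 P.hU hq) P.d2 w₁
    have h1 : form (pd w₂ τ₁ q) (fderiv ℝ τ₂ q w₁) = 0 := hg1τ q hq
    linarith [h]
  have D3 : form Z'' (pd w₁ τ₁ q) = 0 := perp_span_pair (hc1 q hq) D1 D2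
  have D4 : form Z'' (pd w₁ τ₂ q) = 0 := by
    have hfun : ∀ p ∈ U, form (pd w₁ τ₁ p) (pd w₁ τ₂ p) = 0 := fun p hp =>
      perp_span_pair' (hc1 p hp) ((form_comm _ _).trans (pτ1 p hp).2.2.1)
        ((form_comm _ _).trans (pτ1 p hp).2.2.2)
    have h := deriv_form_zero P.hU hq (pd_diffAt P.st1 P.hU hq w₁)
      (pd_diffAt P.st2 P.hU hq w₁) hfun w₂
    have E1 : form (τ₁ q) (fderiv ℝ (pd w₁ τ₂) q w₂) = 0 := by
      have hfun1 : ∀ p ∈ U, form (τ₁ p) (pd w₁ τ₂ p) = 0 := fun p hp =>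
        (form_comm _ _).trans (pτ1 p hp).2.2.1
      have h' := deriv_form_zero P.hU hq (diffAt P.st1 P.hU hq)
        (pd_diffAt P.st2 P.hU hq w₁) hfun1 w₂
      have h1 : form (fderiv ℝ τ₁ q w₂) (pd w₁ τ₂ q) = 0 := hg1τ q hq
      linarith [h']
    have E2 : form (τ₂ q) (fderiv ℝ (pd w₁ τ₂) q w₂) = 0 := by
      have hfun2 : ∀ p ∈ U, form (τ₂ p) (pd w₁ τ₂ p) = 0 := fun p hp =>
        (form_comm _ _).trans (pτ1 p hp).2.2.2
      have h' := deriv_form_zero P.hU hq (diffAt P.st2 P.hU hq)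
        (pd_diffAt P.st2 P.hU hq w₁) hfun2 w₂
      have h1 : form (fderiv ℝ τ₂ q w₂) (pd w₁ τ₂ q) = 0 :=
        perp_span_pair' (hc2 q hq) ((form_comm _ _).trans (pτ1 q hq).2.2.1)
          ((form_comm _ _).trans (pτ1 q hq).2.2.2)
      linarith [h']
    have h2 : form (pd w₁ τ₁ q) (fderiv ℝ (pd w₁ τ₂) q w₂) = 0 :=
      perp_span_pair' (hc1 q hq) E1 E2
    have hsw : fderiv ℝ (pd w₁ τ₁) q w₂ = Z'' := pd_comm P.st1 P.hU hq w₂ w₁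
    have h3 : form (fderiv ℝ (pd w₁ τ₁) q w₂) (pd w₁ τ₂ q) = 0 := by linarith [h]
    rw [hsw] at h3
    exact h3
  have A4 : form (pd w₂ τ₁ q) η = 0 := by
    have h := deriv_form_zero P.hU hq (pd_diffAt P.st1 P.hU hq w₂)
      (pd_diffAt P.sm0 P.hU hq w₁) hlfun w₁
    obtain ⟨r, s, hd⟩ := P.d0τ q hq w₁
    have h1 : form Z'' (pd w₁ σ₀ q) = 0 := by
      show form Z'' (fderiv ℝ σ₀ q w₁) = 0
      rw [show fderiv ℝ σ₀ q w₁ = pd w₁ σ₀ q from rfl, hd, form_comb4_right, D1, D2, D3, D4]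
      ring
    linarith [h, h1]
  -- coefficients and the candidate combination
  set a : ℝ := cra σ₁ σ₂ σ₀ q with hadef
  set b : ℝ := cra σ₂ σ₁ σ₀ q with hbdef
  set c : ℝ := cra τ₁ τ₂ σ₀ q with hcdef
  set d : ℝ := cra τ₂ τ₁ σ₀ q with hddef
  have hane := P.a_ne q hq
  have hbne := P.b_ne q hq
  have hcne := P.c_ne q hq
  have hdne := P.d_ne q hq
  have hene := P.e_ne q hq
  -- ⟨σ₁, τ₂⟩ ≠ 0 and ⟨τ₁, σ₂⟩ ≠ 0
  have hστ2 : form (σ₁ q) (τ₂ q) = -(c / d) * form (σ₁ q) (τ₁ q) := by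
    have h0 : form (σ₀ q) (σ₁ q) = 0 := (P.s0perp q hq).1
    rw [P.s0specτ q hq, form_comb2_left] at h0
    have hcm1 : form (τ₁ q) (σ₁ q) = form (σ₁ q) (τ₁ q) := form_comm _ _
    have hcm2 : form (τ₂ q) (σ₁ q) = form (σ₁ q) (τ₂ q) := form_comm _ _
    rw [hcm1, hcm2] at h0
    rw [hcdef, hddef]
    field_simp
    linarith [h0]
  have hστ2ne : form (σ₁ q) (τ₂ q) ≠ 0 := by
    rw [hστ2]
    simp only [neg_mul, neg_ne_zero]
    exact mul_ne_zero (div_ne_zero hcne hdne) hene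
  have hτσ2 : form (τ₁ q) (σ₂ q) = -(a / b) * form (σ₁ q) (τ₁ q) := by
    have h0 : form (σ₀ q) (τ₁ q) = 0 := (P.s0perp q hq).2.2.1
    rw [P.s0spec q hq, form_comb2_left] at h0
    have hcm2 : form (σ₂ q) (τ₁ q) = form (τ₁ q) (σ₂ q) := form_comm _ _
    rw [hcm2] at h0
    rw [hadef, hbdef]
    field_simp
    linarith [h0]
  have hτσ2ne : form (τ₁ q) (σ₂ q) ≠ 0 := by
    rw [hτσ2]
    simp only [neg_mul, neg_ne_zero]
    exact mul_ne_zero (div_ne_zero hane hbne) hene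
  set x : ℝ := -((a / c) * form (pd w₂ σ₁ q) (τ₂ q)) / form (σ₁ q) (τ₂ q) with hxdef
  set y : ℝ := form (pd w₂ τ₁ q) (σ₂ q) / form (τ₁ q) (σ₂ q) with hydef
  set δ : V6 := pd w₂ τ₁ q - (x • σ₁ q + y • τ₁ q + (a / c) • pd w₂ σ₁ q) with hδdef
  -- norms
  set k : ℝ := form (pd w₂ σ₁ q) (pd w₂ σ₁ q) with hkdef
  set k' : ℝ := form (pd w₂ τ₁ q) (pd w₂ τ₁ q) with hk'def
  have G2τ : form (pd w₂ τ₁ q) (pd w₂ σ₀ q) = c * k' := by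
    obtain ⟨r, s, hd⟩ := P.d0τ q hq w₂
    rw [hd, form_comb4_right, (pτ2 q hq).1, P.d2 q hq,
      hperpfh q hq _ (hc2 q hq)]
    ring
  have G2σ : form (pd w₂ σ₁ q) (pd w₂ σ₀ q) = a * k := by
    obtain ⟨r, s, hd⟩ := P.d0 q hq w₂
    have h4 : form (pd w₂ σ₁ q) (pd w₂ σ₂ q) = 0 :=
      perp_span_pair (P.cv2 q hq) (pσ2 q hq).1 (pσ2 q hq).2.1
    rw [hd, form_comb4_right, (pσ2 q hq).1, P.c2 q hq, h4]
    ring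
  have N1 : form (pd w₂ σ₀ q) (pd w₂ σ₀ q) = a * (a * k) := by
    obtain ⟨r, s, hd⟩ := P.d0 q hq w₂
    nth_rewrite 1 [hd]
    rw [form_comb4_left]
    have e1 : form (σ₁ q) (pd w₂ σ₀ q) = 0 :=
      (form_comm _ _).trans ((P.pd0perp (Or.inr rfl) q hq).1)
    have e2 : form (σ₂ q) (pd w₂ σ₀ q) = 0 :=
      (form_comm _ _).trans ((P.pd0perp (Or.inr rfl) q hq).2.1)
    have e4 : form (pd w₂ σ₂ q) (pd w₂ σ₀ q) = 0 := by
      rw [form_comm]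
      exact hq2 _ (P.cv2 q hq)
    rw [e1, e2, G2σ, e4]
    ring
  have N2 : form (pd w₂ σ₀ q) (pd w₂ σ₀ q) = c * (c * k') := by
    obtain ⟨r, s, hd⟩ := P.d0τ q hq w₂
    nth_rewrite 1 [hd]
    rw [form_comb4_left]
    have e1 : form (τ₁ q) (pd w₂ σ₀ q) = 0 :=
      (form_comm _ _).trans ((P.pd0perp (Or.inr rfl) q hq).2.2.1)
    have e2 : form (τ₂ q) (pd w₂ σ₀ q) = 0 :=
      (form_comm _ _).trans ((P.pd0perp (Or.inr rfl) q hq).2.2.2.1)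
    have e4 : form (pd w₂ τ₂ q) (pd w₂ σ₀ q) = 0 := by
      rw [form_comm]
      exact hq2τ _ (hc2 q hq)
    rw [e1, e2, G2τ, e4]
    ring
  -- the six test vectors
  have pp := P.pos1 q hq
  have qq := (P.swap).pos1 q hq
  have hδσ₂ : form δ (σ₂ q) = 0 := by
    rw [hδdef, form_delta, P.c2 q hq, P.i12 q hq, hydef]
    field_simp
    ring
  have hδτ₂ : form δ (τ₂ q) = 0 := by
    rw [hδdef, form_delta, P.d2 q hq, P.j12 q hq, hxdef]
    field_simp
    ring
  have hδσ₀ : form δ (σ₀ q) = 0 := by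
    rw [hδdef, form_delta]
    rw [hperpfh q hq _ (P.s0fh q hq), (form_comm _ _).trans ((P.s0perp q hq).1),
      (form_comm _ _).trans ((P.s0perp q hq).2.2.1),
      perp_span_pair (P.s0f q hq) (pσ2 q hq).1 (pσ2 q hq).2.1]
    ring
  have hδP : form δ (pd w₁ σ₀ q) = 0 := by
    rw [hδdef, form_delta, hlfun q hq, fσ1 q hq, fτ1 q hq, P.m0 q hq]
    ring
  have hδQ : form δ (pd w₂ σ₀ q) = 0 := by
    rw [hδdef, form_delta, G2τ, G2σ,
      (form_comm _ _).trans ((P.pd0perp (Or.inr rfl) q hq).1),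
      (form_comm _ _).trans ((P.pd0perp (Or.inr rfl) q hq).2.2.1)]
    have hN : a * (a * k) = c * (c * k') := by rw [← N1, ← N2]
    have hc' : c ≠ 0 := hcne
    field_simp
    linarith [hN]
  have hδη : form δ η = 0 := by
    rw [hδdef, form_delta, A4, A1, A2, A3]
    ring
  -- independence of the six vectors
  have hη357 : form η (σ₀ q) ≠ 0 := by
    rw [form_comm, A0]
    exact neg_ne_zero.2 (ne_of_gt pp)
  have hfσ₂σ₀ : form (σ₂ q) (σ₀ q) = 0 := (form_comm _ _).trans ((P.s0perp q hq).2.1)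
  have hfτ₂σ₀ : form (τ₂ q) (σ₀ q) = 0 := (form_comm _ _).trans ((P.s0perp q hq).2.2.2.1)
  have hfσ₀σ₀ : form (σ₀ q) (σ₀ q) = 0 := (P.s0perp q hq).2.2.2.2
  have hfPσ₀ : form (pd w₁ σ₀ q) (σ₀ q) = 0 := (P.pd0perp (Or.inl rfl) q hq).2.2.2.2
  have hfQσ₀ : form (pd w₂ σ₀ q) (σ₀ q) = 0 := (P.pd0perp (Or.inr rfl) q hq).2.2.2.2
  have hfσ₂P : form (σ₂ q) (pd w₁ σ₀ q) = 0 :=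
    (form_comm _ _).trans ((P.pd0perp (Or.inl rfl) q hq).2.1)
  have hfτ₂P : form (τ₂ q) (pd w₁ σ₀ q) = 0 :=
    (form_comm _ _).trans ((P.pd0perp (Or.inl rfl) q hq).2.2.2.1)
  have hfσ₀P : form (σ₀ q) (pd w₁ σ₀ q) = 0 := fs0 q hq
  have hfQP : form (pd w₂ σ₀ q) (pd w₁ σ₀ q) = 0 := (form_comm _ _).trans (P.j0 q hq)
  have hfσ₂Q : form (σ₂ q) (pd w₂ σ₀ q) = 0 :=
    (form_comm _ _).trans ((P.pd0perp (Or.inr rfl) q hq).2.1)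
  have hfτ₂Q : form (τ₂ q) (pd w₂ σ₀ q) = 0 :=
    (form_comm _ _).trans ((P.pd0perp (Or.inr rfl) q hq).2.2.2.1)
  have hfσ₀Q : form (σ₀ q) (pd w₂ σ₀ q) = 0 :=
    (form_comm _ _).trans ((P.pd0perp (Or.inr rfl) q hq).2.2.2.2)
  have hfPQ : form (pd w₁ σ₀ q) (pd w₂ σ₀ q) = 0 := P.j0 q hq
  set v : Fin 6 → V6 := ![σ₂ q, τ₂ q, σ₀ q, pd w₁ σ₀ q, pd w₂ σ₀ q, η] with hvdef
  have hv0 : v 0 = σ₂ q := rfl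
  have hv1 : v 1 = τ₂ q := rfl
  have hv2 : v 2 = σ₀ q := rfl
  have hv3 : v 3 = pd w₁ σ₀ q := rfl
  have hv4 : v 4 = pd w₂ σ₀ q := rfl
  have hv5 : v 5 = η := rfl
  have hind : LinearIndependent ℝ v := by
    apply indep_six
    intro g hg
    rw [hv0, hv1, hv2, hv3, hv4, hv5] at hg
    have eq1 := congrArg (fun z : V6 => form z (σ₀ q)) hg
    simp only [form_comb6_left, form_zero_left] at eq1
    rw [hfσ₂σ₀, hfτ₂σ₀, hfσ₀σ₀, hfPσ₀, hfQσ₀] at eq1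
    have hg5 : g 5 = 0 := by
      rcases mul_eq_zero.1 (by linarith [eq1] : g 5 * form η (σ₀ q) = 0) with h | h
      · exact h
      · exact absurd h hη357
    have eq2 := congrArg (fun z : V6 => form z (pd w₁ σ₀ q)) hg
    simp only [form_comb6_left, form_zero_left] at eq2
    rw [hfσ₂P, hfτ₂P, hfσ₀P, hfQP, hg5] at eq2
    have hPP : form (pd w₁ σ₀ q) (pd w₁ σ₀ q) ≠ 0 := ne_of_gt pp
    have hg3 : g 3 = 0 := by
      rcases mul_eq_zero.1 (by linarith [eq2] :
        g 3 * form (pd w₁ σ₀ q) (pd w₁ σ₀ q) = 0) with h | h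
      · exact h
      · exact absurd h hPP
    have eq3 := congrArg (fun z : V6 => form z (pd w₂ σ₀ q)) hg
    simp only [form_comb6_left, form_zero_left] at eq3
    rw [hfσ₂Q, hfτ₂Q, hfσ₀Q, hg5] at eq3
    have e5 : form (pd w₁ σ₀ q) (pd w₂ σ₀ q) = 0 := hfPQ
    rw [e5] at eq3
    have hQQ : form (pd w₂ σ₀ q) (pd w₂ σ₀ q) ≠ 0 := ne_of_gt qq
    have hg4 : g 4 = 0 := by
      rcases mul_eq_zero.1 (by linarith [eq3] :
        g 4 * form (pd w₂ σ₀ q) (pd w₂ σ₀ q) = 0) with h | h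
      · exact h
      · exact absurd h hQQ
    -- remaining : g0 σ₂ + g1 τ₂ + g2 σ₀ = 0
    have hrem : g 0 • σ₂ q + g 1 • τ₂ q + g 2 • σ₀ q = 0 := by
      rw [hg5, hg3, hg4] at hg
      linear_combination (norm := module) hg
    have hg1 : g 1 = 0 := by
      by_contra hg1
      apply P.t2nf q hq
      have hmem : g 1 • τ₂ q ∈ spanF σ₁ σ₂ q := by
        have hco : g 1 • τ₂ q = -(g 0 • σ₂ q) - g 2 • σ₀ q := by
          linear_combination (norm := module) hrem
        rw [hco]
        refine Submodule.sub_mem _ (Submodule.neg_mem _ ?_) ?_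
        · exact Submodule.smul_mem _ _ (Submodule.subset_span (by simp))
        · exact Submodule.smul_mem _ _ (P.s0f q hq)
      exact (Submodule.smul_mem_iff _ hg1).1 hmem
    have hg2 : g 2 = 0 := by
      by_contra hg2
      apply P.np2 q hq
      rw [hg1, zero_smul, add_zero] at hrem
      have h' : g 2 • σ₀ q = -(g 0 • σ₂ q) := by
        linear_combination (norm := module) hrem
      rw [Submodule.mem_span_singleton]
      refine ⟨(g 2)⁻¹ * -(g 0), ?_⟩
      calc ((g 2)⁻¹ * -(g 0)) • σ₂ q = (g 2)⁻¹ • (-(g 0 • σ₂ q)) := by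
            rw [← smul_smul, neg_smul]
        _ = (g 2)⁻¹ • (g 2 • σ₀ q) := by rw [h']
        _ = σ₀ q := by rw [smul_smul, inv_mul_cancel₀ hg2, one_smul]
    have hg0 : g 0 = 0 := by
      rw [hg1, hg2] at hrem
      simp only [zero_smul, add_zero] at hrem
      rcases smul_eq_zero.1 hrem with h | h
      · exact h
      · exact absurd h (pair_ne_zero (P.ind q hq)).2
    intro i
    fin_cases i
    · exact hg0
    · exact hg1
    · exact hg2
    · exact hg3
    · exact hg4
    · exact hg5
  have hperpv : ∀ i, form δ (v i) = 0 := by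
    intro i
    fin_cases i
    · exact hδσ₂
    · exact hδτ₂
    · exact hδσ₀
    · exact hδP
    · exact hδQ
    · exact hδη
  have hδ0 : δ = 0 := eq_zero_of_perp_six hind hperpv
  have hfin : pd w₂ τ₁ q = x • σ₁ q + y • τ₁ q + (a / c) • pd w₂ σ₁ q :=
    sub_eq_zero.1 hδ0
  exact mem_span_triple.2 ⟨x, y, a / c, hfin⟩


lemma backward_half {q : ℝ × ℝ} (hq : q ∈ U)
    (hF1 : form (pd w₁ τ₁ q) (pd w₁ σ₀ q) = 0)
    (hF2 : form (pd w₁ τ₂ q) (pd w₂ σ₀ q) = 0) :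
    pd w₁ τ₁ q ∈ spanF τ₁ τ₂ q := by
  have pτ1 := perp_aux P.hU P.st1 P.st2 P.j11 P.j12 P.j22 P.d1 q hq
  have pp := P.pos1 q hq
  have qq := (P.swap).pos1 q hq
  have hPτ1 : form (τ₁ q) (pd w₁ σ₀ q) = 0 :=
    (form_comm _ _).trans ((P.pd0perp (Or.inl rfl) q hq).2.2.1)
  have hPτ2 : form (τ₂ q) (pd w₁ σ₀ q) = 0 :=
    (form_comm _ _).trans ((P.pd0perp (Or.inl rfl) q hq).2.2.2.1)
  have hQτ1 : form (τ₁ q) (pd w₂ σ₀ q) = 0 :=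
    (form_comm _ _).trans ((P.pd0perp (Or.inr rfl) q hq).2.2.1)
  have hQτ2 : form (τ₂ q) (pd w₂ σ₀ q) = 0 :=
    (form_comm _ _).trans ((P.pd0perp (Or.inr rfl) q hq).2.2.2.1)
  have hj0 := P.j0 q hq
  -- Step A : ⟨∂₁τ₁, ∂₂σ₀⟩ = 0
  have hA : form (pd w₁ τ₁ q) (pd w₂ σ₀ q) = 0 := by
    obtain ⟨r, s, hd⟩ := P.d0τ q hq w₁
    have h0 := P.j0 q hq
    rw [hd, form_comb4_left, hQτ1, hQτ2, hF2] at h0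
    have hc := P.c_ne q hq
    have : cra τ₁ τ₂ σ₀ q * form (pd w₁ τ₁ q) (pd w₂ σ₀ q) = 0 := by linarith [h0]
    rcases mul_eq_zero.1 this with h | h
    · exact absurd h hc
    · exact h
  -- the kernel submodule
  set L : V6 →ₗ[ℝ] ℝ × ℝ := (formL (τ₁ q)).prod (formL (τ₂ q)) with hLdef
  have hLapp : ∀ z : V6, L z = (form z (τ₁ q), form z (τ₂ q)) := fun z => rfl
  set K := LinearMap.ker L with hKdef
  have memK : ∀ z : V6, form z (τ₁ q) = 0 → form z (τ₂ q) = 0 → z ∈ K := by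
    intro z h1 h2
    rw [hKdef, LinearMap.mem_ker, hLapp, h1, h2]
    rfl
  set v4 : Fin 4 → V6 := ![τ₁ q, τ₂ q, pd w₁ σ₀ q, pd w₂ σ₀ q] with hv4def
  have hv40 : v4 0 = τ₁ q := rfl
  have hv41 : v4 1 = τ₂ q := rfl
  have hv42 : v4 2 = pd w₁ σ₀ q := rfl
  have hv43 : v4 3 = pd w₂ σ₀ q := rfl
  have hindep4 : LinearIndependent ℝ v4 := by
    apply indep_four
    intro g hg
    rw [hv40, hv41, hv42, hv43] at hg
    have eq2 := congrArg (fun z : V6 => form z (pd w₁ σ₀ q)) hg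
    simp only [form_comb4_left, form_zero_left] at eq2
    rw [hPτ1, hPτ2, (form_comm _ _).trans hj0] at eq2
    have hg2 : g 2 = 0 := by
      rcases mul_eq_zero.1 (by linarith [eq2] :
        g 2 * form (pd w₁ σ₀ q) (pd w₁ σ₀ q) = 0) with h | h
      · exact h
      · exact absurd h (ne_of_gt pp)
    have eq3 := congrArg (fun z : V6 => form z (pd w₂ σ₀ q)) hg
    simp only [form_comb4_left, form_zero_left] at eq3
    rw [hQτ1, hQτ2, hj0] at eq3
    have hg3 : g 3 = 0 := by
      rcases mul_eq_zero.1 (by linarith [eq3] :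
        g 3 * form (pd w₂ σ₀ q) (pd w₂ σ₀ q) = 0) with h | h
      · exact h
      · exact absurd h (ne_of_gt qq)
    have hrem : g 0 • τ₁ q + g 1 • τ₂ q = 0 := by
      rw [hg2, hg3] at hg
      linear_combination (norm := module) hg
    have h01 := pair_indep_iff.1 (P.indτ q hq) (g 0) (g 1) hrem
    intro i
    fin_cases i
    · exact h01.1
    · exact h01.2
    · exact hg2
    · exact hg3
  have hle : Submodule.span ℝ (Set.range v4) ≤ K := by
    rw [Submodule.span_le]
    rintro z ⟨i, rfl⟩
    fin_cases i
    · exact memK _ (P.j11 q hq) (P.j12 q hq)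
    · exact memK _ ((form_comm _ _).trans (P.j12 q hq)) (P.j22 q hq)
    · exact memK _ ((P.pd0perp (Or.inl rfl) q hq).2.2.1) ((P.pd0perp (Or.inl rfl) q hq).2.2.2.1)
    · exact memK _ ((P.pd0perp (Or.inr rfl) q hq).2.2.1) ((P.pd0perp (Or.inr rfl) q hq).2.2.2.1)
  have hspan4 : finrank ℝ (Submodule.span ℝ (Set.range v4)) = 4 := by
    rw [finrank_span_eq_card hindep4]
    simp
  have hKfin : finrank ℝ K ≤ 4 := by
    have hu1 : L (J (τ₁ q)) = (dt (τ₁ q) (τ₁ q), dt (τ₁ q) (τ₂ q)) := by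
      rw [hLapp, form_J', form_J']
    have hu2 : L (J (τ₂ q)) = (dt (τ₂ q) (τ₁ q), dt (τ₂ q) (τ₂ q)) := by
      rw [hLapp, form_J', form_J']
    have hG := gram_ne_zero (P.indτ q hq)
    have hindu : LinearIndependent ℝ ![L (J (τ₁ q)), L (J (τ₂ q))] := by
      rw [LinearIndependent.pair_iff]
      intro s t hst
      rw [hu1, hu2] at hst
      have e1 : s * dt (τ₁ q) (τ₁ q) + t * dt (τ₂ q) (τ₁ q) = 0 := by
        have := congrArg Prod.fst hst
        simpa using this
      have e2 : s * dt (τ₁ q) (τ₂ q) + t * dt (τ₂ q) (τ₂ q) = 0 := by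
        have := congrArg Prod.snd hst
        simpa using this
      rw [dt_comm (τ₂ q) (τ₁ q)] at e1
      constructor
      · have hs : s * (dt (τ₁ q) (τ₁ q) * dt (τ₂ q) (τ₂ q) - dt (τ₁ q) (τ₂ q) * dt (τ₁ q) (τ₂ q)) = 0 := by
          linear_combination dt (τ₂ q) (τ₂ q) * e1 - dt (τ₁ q) (τ₂ q) * e2
        exact (mul_eq_zero.1 hs).resolve_right hG
      · have ht : t * (dt (τ₁ q) (τ₁ q) * dt (τ₂ q) (τ₂ q) - dt (τ₁ q) (τ₂ q) * dt (τ₁ q) (τ₂ q)) = 0 := by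
          linear_combination dt (τ₁ q) (τ₁ q) * e2 - dt (τ₁ q) (τ₂ q) * e1
        exact (mul_eq_zero.1 ht).resolve_right hG
    have hrange2 : 2 ≤ finrank ℝ (LinearMap.range L) := by
      have hle2 : Submodule.span ℝ (Set.range ![L (J (τ₁ q)), L (J (τ₂ q))])
          ≤ LinearMap.range L := by
        rw [Submodule.span_le]
        rintro z ⟨i, rfl⟩
        fin_cases i
        · exact ⟨J (τ₁ q), rfl⟩
        · exact ⟨J (τ₂ q), rfl⟩
      have := Submodule.finrank_mono hle2
      rw [finrank_span_eq_card hindu] at this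
      simpa using this
    have hrn := LinearMap.finrank_range_add_finrank_ker L
    rw [← hKdef] at hrn
    have h6 : finrank ℝ V6 = 6 := by simp
    rw [h6] at hrn
    omega
  have heq : Submodule.span ℝ (Set.range v4) = K :=
    Submodule.eq_of_le_of_finrank_le hle (by omega)
  have hF1mem : pd w₁ τ₁ q ∈ K := memK _ (pτ1.1) (pτ1.2.1)
  rw [← heq] at hF1mem
  have hrange : Set.range v4 = {τ₁ q, τ₂ q, pd w₁ σ₀ q, pd w₂ σ₀ q} := range_four
  rw [hrange] at hF1mem
  rcases mem_span_quad.1 hF1mem with ⟨α, β, γ, δ', hF⟩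
  have eγ : γ = 0 := by
    have e := congrArg (fun z : V6 => form z (pd w₁ σ₀ q)) hF
    simp only [form_comb4_left] at e
    rw [hF1, hPτ1, hPτ2, (form_comm _ _).trans hj0] at e
    rcases mul_eq_zero.1 (by linarith [e] :
      γ * form (pd w₁ σ₀ q) (pd w₁ σ₀ q) = 0) with h | h
    · exact h
    · exact absurd h (ne_of_gt pp)
  have eδ : δ' = 0 := by
    have e := congrArg (fun z : V6 => form z (pd w₂ σ₀ q)) hF
    simp only [form_comb4_left] at e
    rw [hA, hQτ1, hQτ2, hj0] at e
    rcases mul_eq_zero.1 (by linarith [e] :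
      δ' * form (pd w₂ σ₀ q) (pd w₂ σ₀ q) = 0) with h | h
    · exact h
    · exact absurd h (ne_of_gt qq)
  rw [eγ, eδ, zero_smul, zero_smul, add_zero, add_zero] at hF
  exact Submodule.mem_span_pair.2 ⟨α, β, hF.symm⟩

end Pack

end Rib

/-- Proposition 2.7 of the paper: a pair of umbilic-free Legendre maps enveloping a
common sphere congruence `span{σ₀}` (nowhere a curvature sphere of either) is a
Ribaucour pair (the curvature directions `X̂₁, X̂₂` of the second map are parallel to
`∂_u, ∂_v`) if and only if `∂_{X̂₂}σ̂₁ ∈ span{σ₁,σ̂₁,∂_vσ₁}` and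
`∂_{X̂₁}σ̂₂ ∈ span{σ₂,σ̂₂,∂_uσ₂}` at every point. -/
theorem ribaucour_iff_dupin_cyclide_congruences_coincide
    (U : Set (ℝ × ℝ)) (σ₁ σ₂ : ℝ × ℝ → V6)
    (hL : IsLegendre U σ₁ σ₂)
    (τ₁ τ₂ : ℝ × ℝ → V6)
    (hτ₁smooth : ContDiffOn ℝ (⊤ : ℕ∞) τ₁ U) (hτ₂smooth : ContDiffOn ℝ (⊤ : ℕ∞) τ₂ U)
    (hτindep : ∀ p ∈ U, LinearIndependent ℝ ![τ₁ p, τ₂ p])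
    (hτiso : ∀ p ∈ U, form (τ₁ p) (τ₁ p) = 0 ∧ form (τ₁ p) (τ₂ p) = 0 ∧
      form (τ₂ p) (τ₂ p) = 0)
    (hτcontact : ∀ p ∈ U, form (pu τ₁ p) (τ₂ p) = 0 ∧ form (pv τ₁ p) (τ₂ p) = 0)
    (X₁ X₂ : ℝ × ℝ → ℝ × ℝ)
    (hX₁smooth : ContDiffOn ℝ (⊤ : ℕ∞) X₁ U) (hX₂smooth : ContDiffOn ℝ (⊤ : ℕ∞) X₂ U)
    (hXindep : ∀ p ∈ U, LinearIndependent ℝ ![X₁ p, X₂ p])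
    (hcurv₁ : ∀ p ∈ U, fderiv ℝ τ₁ p (X₁ p) ∈ spanF τ₁ τ₂ p)
    (hcurv₂ : ∀ p ∈ U, fderiv ℝ τ₂ p (X₂ p) ∈ spanF τ₁ τ₂ p)
    (humb₁ : ∀ p ∈ U, fderiv ℝ τ₁ p (X₂ p) ∉ spanF τ₁ τ₂ p)
    (humb₂ : ∀ p ∈ U, fderiv ℝ τ₂ p (X₁ p) ∉ spanF τ₁ τ₂ p)
    (σ₀ : ℝ × ℝ → V6)
    (hσ₀smooth : ContDiffOn ℝ (⊤ : ℕ∞) σ₀ U)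
    (hσ₀0 : ∀ p ∈ U, σ₀ p ≠ 0)
    (hmeet : ∀ p ∈ U, spanF σ₁ σ₂ p ⊓ spanF τ₁ τ₂ p
      = Submodule.span ℝ ({σ₀ p} : Set V6))
    (hnp₁ : ∀ p ∈ U, σ₀ p ∉ Submodule.span ℝ ({σ₁ p} : Set V6))
    (hnp₂ : ∀ p ∈ U, σ₀ p ∉ Submodule.span ℝ ({σ₂ p} : Set V6))
    (hnp₃ : ∀ p ∈ U, σ₀ p ∉ Submodule.span ℝ ({τ₁ p} : Set V6))
    (hnp₄ : ∀ p ∈ U, σ₀ p ∉ Submodule.span ℝ ({τ₂ p} : Set V6)) :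
    (∀ p ∈ U, X₁ p ∈ Submodule.span ℝ ({((1 : ℝ), (0 : ℝ))} : Set (ℝ × ℝ)) ∧
        X₂ p ∈ Submodule.span ℝ ({((0 : ℝ), (1 : ℝ))} : Set (ℝ × ℝ)))
      ↔ (∀ p ∈ U,
        fderiv ℝ τ₁ p (X₂ p)
          ∈ Submodule.span ℝ ({σ₁ p, τ₁ p, pv σ₁ p} : Set V6) ∧
        fderiv ℝ τ₂ p (X₁ p)
          ∈ Submodule.span ℝ ({σ₂ p, τ₂ p, pu σ₂ p} : Set V6)) := by

  have P : Rib.Pack U (1, 0) (0, 1) σ₁ σ₂ τ₁ τ₂ σ₀ :=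
    ⟨hL.open_U, hL.smooth₁, hL.smooth₂, hτ₁smooth, hτ₂smooth, hσ₀smooth, hL.indep, hτindep,
      hL.iso₁₁, hL.iso₁₂, hL.iso₂₂,
      fun p hp => (hτiso p hp).1, fun p hp => (hτiso p hp).2.1, fun p hp => (hτiso p hp).2.2,
      hL.contact_u, hL.contact_v,
      fun p hp => (hτcontact p hp).1, fun p hp => (hτcontact p hp).2,
      hL.curv₁, hL.curv₂, hL.umb₁, hL.umb₂, hσ₀0, hmeet, hnp₁, hnp₂, hnp₃, hnp₄⟩
  constructor
  · -- forward direction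
    intro hX
    have hc1 : ∀ p ∈ U, Rib.pd (1, 0) τ₁ p ∈ spanF τ₁ τ₂ p := by
      intro p hp
      obtain ⟨lam, hlam⟩ := Submodule.mem_span_singleton.1 (hX p hp).1
      have hne : X₁ p ≠ 0 := (Rib.pair_ne_zero' (hXindep p hp)).1
      have hlamne : lam ≠ 0 := by
        rintro rfl; rw [zero_smul] at hlam; exact hne hlam.symm
      have hmem := hcurv₁ p hp
      rw [← hlam, map_smul] at hmem
      exact (Submodule.smul_mem_iff _ hlamne).1 hmem
    have hc2 : ∀ p ∈ U, Rib.pd (0, 1) τ₂ p ∈ spanF τ₁ τ₂ p := by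
      intro p hp
      obtain ⟨mu, hmu⟩ := Submodule.mem_span_singleton.1 (hX p hp).2
      have hne : X₂ p ≠ 0 := (Rib.pair_ne_zero' (hXindep p hp)).2
      have hmune : mu ≠ 0 := by
        rintro rfl; rw [zero_smul] at hmu; exact hne hmu.symm
      have hmem := hcurv₂ p hp
      rw [← hmu, map_smul] at hmem
      exact (Submodule.smul_mem_iff _ hmune).1 hmem
    intro p hp
    constructor
    · obtain ⟨mu, hmu⟩ := Submodule.mem_span_singleton.1 (hX p hp).2
      have hres := P.forward_core hc1 hc2 p hp
      rw [← hmu, map_smul]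
      exact Submodule.smul_mem _ _ hres
    · obtain ⟨lam, hlam⟩ := Submodule.mem_span_singleton.1 (hX p hp).1
      have hc1' : ∀ p ∈ U, Rib.pd (0, 1) τ₂ p ∈ spanF τ₂ τ₁ p := by
        intro p hp; rw [Rib.spanF_comm]; exact hc2 p hp
      have hc2' : ∀ p ∈ U, Rib.pd (1, 0) τ₁ p ∈ spanF τ₂ τ₁ p := by
        intro p hp; rw [Rib.spanF_comm]; exact hc1 p hp
      have hres := (P.swap).forward_core hc1' hc2' p hp
      rw [← hlam, map_smul]
      exact Submodule.smul_mem _ _ hres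
  · -- backward direction
    intro hD p hp
    have hPperp := P.pd0perp (Or.inl rfl) p hp
    have hQperp := P.pd0perp (Or.inr rfl) p hp
    have hdet := Rib.det_ne_of_indep (hXindep p hp)
    -- elimination with ∂₁σ₀
    have e1a : form (fderiv ℝ τ₁ p (X₁ p)) (Rib.pd (1, 0) σ₀ p) = 0 :=
      Rib.perp_span_pair' (hcurv₁ p hp)
        ((Rib.form_comm _ _).trans hPperp.2.2.1)
        ((Rib.form_comm _ _).trans hPperp.2.2.2.1)
    have e1b : form (fderiv ℝ τ₁ p (X₂ p)) (Rib.pd (1, 0) σ₀ p) = 0 :=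
      Rib.perp_span_triple' (hD p hp).1
        ((Rib.form_comm _ _).trans hPperp.1)
        ((Rib.form_comm _ _).trans hPperp.2.2.1)
        (P.m0 p hp)
    rw [Rib.fderiv_dir τ₁ p (X₁ p), Rib.form_comb2_left] at e1a
    rw [Rib.fderiv_dir τ₁ p (X₂ p), Rib.form_comb2_left] at e1b
    have hu : form (Rib.pd (1, 0) τ₁ p) (Rib.pd (1, 0) σ₀ p) = 0 := by
      have hh : ((X₁ p).1 * (X₂ p).2 - (X₁ p).2 * (X₂ p).1)
          * form (Rib.pd (1, 0) τ₁ p) (Rib.pd (1, 0) σ₀ p) = 0 := by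
        linear_combination (X₂ p).2 * e1a - (X₁ p).2 * e1b
      exact (mul_eq_zero.1 hh).resolve_left hdet
    have hv : form (Rib.pd (0, 1) τ₁ p) (Rib.pd (1, 0) σ₀ p) = 0 := by
      have hh : ((X₁ p).1 * (X₂ p).2 - (X₁ p).2 * (X₂ p).1)
          * form (Rib.pd (0, 1) τ₁ p) (Rib.pd (1, 0) σ₀ p) = 0 := by
        linear_combination (X₁ p).1 * e1b - (X₂ p).1 * e1a
      exact (mul_eq_zero.1 hh).resolve_left hdet
    -- elimination with ∂₂σ₀
    have e2a : form (fderiv ℝ τ₂ p (X₂ p)) (Rib.pd (0, 1) σ₀ p) = 0 :=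
      Rib.perp_span_pair' (hcurv₂ p hp)
        ((Rib.form_comm _ _).trans hQperp.2.2.1)
        ((Rib.form_comm _ _).trans hQperp.2.2.2.1)
    have e2b : form (fderiv ℝ τ₂ p (X₁ p)) (Rib.pd (0, 1) σ₀ p) = 0 :=
      Rib.perp_span_triple' (hD p hp).2
        ((Rib.form_comm _ _).trans hQperp.2.1)
        ((Rib.form_comm _ _).trans hQperp.2.2.2.1)
        ((P.swap).m0 p hp)
    rw [Rib.fderiv_dir τ₂ p (X₂ p), Rib.form_comb2_left] at e2a
    rw [Rib.fderiv_dir τ₂ p (X₁ p), Rib.form_comb2_left] at e2b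
    have hu' : form (Rib.pd (1, 0) τ₂ p) (Rib.pd (0, 1) σ₀ p) = 0 := by
      have hh : ((X₁ p).1 * (X₂ p).2 - (X₁ p).2 * (X₂ p).1)
          * form (Rib.pd (1, 0) τ₂ p) (Rib.pd (0, 1) σ₀ p) = 0 := by
        linear_combination (X₂ p).2 * e2b - (X₁ p).2 * e2a
      exact (mul_eq_zero.1 hh).resolve_left hdet
    have hv' : form (Rib.pd (0, 1) τ₂ p) (Rib.pd (0, 1) σ₀ p) = 0 := by
      have hh : ((X₁ p).1 * (X₂ p).2 - (X₁ p).2 * (X₂ p).1)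
          * form (Rib.pd (0, 1) τ₂ p) (Rib.pd (0, 1) σ₀ p) = 0 := by
        linear_combination (X₁ p).1 * e2a - (X₂ p).1 * e2b
      exact (mul_eq_zero.1 hh).resolve_left hdet
    have hpu : Rib.pd (1, 0) τ₁ p ∈ spanF τ₁ τ₂ p := P.backward_half hp hu hu'
    have hpv2 : Rib.pd (0, 1) τ₂ p ∈ spanF τ₁ τ₂ p := by
      have h := (P.swap).backward_half hp hv' hv
      rw [Rib.spanF_comm] at h
      exact h
    constructor
    · obtain ⟨α, β, hz⟩ := Rib.solve2 hdet ((1 : ℝ), (0 : ℝ))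
      have hfd : fderiv ℝ τ₁ p ((1 : ℝ), (0 : ℝ))
          = α • fderiv ℝ τ₁ p (X₁ p) + β • fderiv ℝ τ₁ p (X₂ p) := by
        conv_lhs => rw [hz]
        rw [map_add, map_smul, map_smul]
      have hβ : β = 0 := by
        by_contra hβ
        apply humb₁ p hp
        have heq2 : β • fderiv ℝ τ₁ p (X₂ p)
            = fderiv ℝ τ₁ p ((1 : ℝ), (0 : ℝ)) - α • fderiv ℝ τ₁ p (X₁ p) := by
          rw [hfd]; module
        have hmem : β • fderiv ℝ τ₁ p (X₂ p) ∈ spanF τ₁ τ₂ p := by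
          rw [heq2]
          exact Submodule.sub_mem _ hpu (Submodule.smul_mem _ _ (hcurv₁ p hp))
        exact (Submodule.smul_mem_iff _ hβ).1 hmem
      have hα : α ≠ 0 := by
        rintro rfl
        rw [hβ, zero_smul, zero_smul, add_zero] at hz
        exact (one_ne_zero : (1 : ℝ) ≠ 0) (by simpa using congrArg Prod.fst hz)
      rw [hβ, zero_smul, add_zero] at hz
      rw [Submodule.mem_span_singleton]
      exact ⟨α⁻¹, by rw [hz, smul_smul, inv_mul_cancel₀ hα, one_smul]⟩
    · obtain ⟨α, β, hz⟩ := Rib.solve2 hdet ((0 : ℝ), (1 : ℝ))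
      have hfd : fderiv ℝ τ₂ p ((0 : ℝ), (1 : ℝ))
          = α • fderiv ℝ τ₂ p (X₁ p) + β • fderiv ℝ τ₂ p (X₂ p) := by
        conv_lhs => rw [hz]
        rw [map_add, map_smul, map_smul]
      have hα : α = 0 := by
        by_contra hα
        apply humb₂ p hp
        have heq2 : α • fderiv ℝ τ₂ p (X₁ p)
            = fderiv ℝ τ₂ p ((0 : ℝ), (1 : ℝ)) - β • fderiv ℝ τ₂ p (X₂ p) := by
          rw [hfd]; module
        have hmem : α • fderiv ℝ τ₂ p (X₁ p) ∈ spanF τ₁ τ₂ p := by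
          rw [heq2]
          exact Submodule.sub_mem _ hpv2 (Submodule.smul_mem _ _ (hcurv₂ p hp))
        exact (Submodule.smul_mem_iff _ hα).1 hmem
      have hβ : β ≠ 0 := by
        rintro rfl
        rw [hα, zero_smul, zero_smul, add_zero] at hz
        exact (one_ne_zero : (1 : ℝ) ≠ 0) (by simpa using congrArg Prod.snd hz)
      rw [hα, zero_smul, zero_add] at hz
      rw [Submodule.mem_span_singleton]
      exact ⟨β⁻¹, by rw [hz, smul_smul, inv_mul_cancel₀ hβ, one_smul]⟩
end
end

section
/- Let I, J ⊆ ℝ be open intervals, and let σ : I → ℝ^6 be smooth with ⟨σ,σ⟩ = 0, σ nowhere zero, and ⟨σ',σ'⟩ > 0 (a regular sphere curve). Let v₁,v₂,v₃ : I → ℝ^6 be smooth and pointwise linearly independent with σ(t), σ'(t) ∈ V(t) := span{v₁(t),v₂(t),v₃(t)} for all t, and suppose the restriction of ⟨,⟩ to V(t) is nondegenerate of signature (2,1). Let τ : I×J → ℝ^6 be smooth, nowhere zero, with ⟨τ,τ⟩ = 0, τ(t,θ) ⊥ V(t) for all (t,θ), and ∂_θτ(t,θ) ∉ span{τ(t,θ)}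 at every point. Extend σ to I×J by σ(t,θ) := σ(t). Then f := span{σ,τ} is a Legendre map: at every point (i) σ(t,θ) and τ(t,θ) span a 2-dimensional totally isotropic subspace; (ii) the contact condition holds: ⟨∂_tσ,τ⟩ = ⟨∂_θσ,τ⟩ = ⟨∂_tτ,σ⟩ = ⟨∂_θτ,σ⟩ = 0; (iii) the immersion condition holds: for every (a,b) ≠ (0,0), either a∂_tσ + b∂_θσ ∉ f or a∂_tτ + b∂_θτ ∉ f. -/
noncomputable section

/-! ### Auxiliary lemmas about `form` -/

lemma form_comm (x y : V6) : form x y = form y x := by simp [form]; ring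

lemma form_add_left (x y z : V6) : form (x + y) z = form x z + form y z := by
  simp [form, Pi.add_apply]; ring

lemma form_smul_left (c : ℝ) (x y : V6) : form (c • x) y = c * form x y := by
  simp [form, Pi.smul_apply, smul_eq_mul]; ring

lemma form_add_right (x y z : V6) : form x (y + z) = form x y + form x z := by
  simp [form, Pi.add_apply]; ring

lemma form_smul_right (c : ℝ) (x y : V6) : form x (c • y) = c * form x y := by
  simp [form, Pi.smul_apply, smul_eq_mul]; ring

lemma form_zero_left (y : V6) : form 0 y = 0 := by simp [form]

lemma form_zero_right (x : V6) : form x 0 = 0 := by simp [form]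

lemma form_combo (s u : ℝ) (x y : V6) :
    form (s • x + u • y) (s • x + u • y)
      = s * s * form x x + 2 * (s * u) * form x y + u * u * form y y := by
  simp only [form_add_left, form_add_right, form_smul_left, form_smul_right, form_comm y x]
  ring

/-- `form` as a bilinear map. -/
def formL : V6 →ₗ[ℝ] V6 →ₗ[ℝ] ℝ :=
  LinearMap.mk₂ ℝ form form_add_left form_smul_left form_add_right form_smul_right

/-- `form` as a continuous bilinear map. -/
def formCLM : V6 →L[ℝ] V6 →L[ℝ] ℝ :=
  LinearMap.toContinuousLinearMap
    { toFun := fun x => LinearMap.toContinuousLinearMap (formL x)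
      map_add' := fun x y => by ext z; simp [formL, form_add_left]
      map_smul' := fun c x => by ext z; simp [formL, form_smul_left] }

@[simp] lemma formCLM_apply (x y : V6) : formCLM x y = form x y := rfl

/-- Product rule for `form`. -/
lemma hasFDerivAt_form {E : Type*} [NormedAddCommGroup E] [NormedSpace ℝ E]
    {f g : E → V6} {f' g' : E →L[ℝ] V6} {p : E}
    (hf : HasFDerivAt f f' p) (hg : HasFDerivAt g g' p) :
    HasFDerivAt (fun x => form (f x) (g x))
      ((formCLM.isBoundedBilinearMap.deriv (f p, g p)).comp (f'.prod g')) p :=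
  by have := (formCLM.isBoundedBilinearMap.hasFDerivAt (f p, g p)).comp p (hf.prodMk hg); exact this

/-- If `form (f x) (g x)` vanishes near `p`, then the Leibniz-rule identity holds. -/
lemma form_deriv_zero {E : Type*} [NormedAddCommGroup E] [NormedSpace ℝ E]
    {f g : E → V6} {f' g' : E →L[ℝ] V6} {p : E}
    (hf : HasFDerivAt f f' p) (hg : HasFDerivAt g g' p)
    (h0 : ∀ᶠ q in nhds p, form (f q) (g q) = 0) (w : E) :
    form (f p) (g' w) + form (f' w) (g p) = 0 := by
  have h1 := hasFDerivAt_form hf hg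
  have h2 : HasFDerivAt (fun x => form (f x) (g x)) (0 : E →L[ℝ] ℝ) p :=
    (hasFDerivAt_const (0 : ℝ) p).congr_of_eventuallyEq
      (by filter_upwards [h0] with q hq; simp [hq])
  have h3 := congrArg (fun L : E →L[ℝ] ℝ => L w) (h1.unique h2)
  simpa using h3

lemma form_span_zero {w : V6} {s : Set V6} (h : ∀ v ∈ s, form w v = 0)
    {x : V6} (hx : x ∈ Submodule.span ℝ s) : form w x = 0 := by
  induction hx using Submodule.span_induction with
  | mem v hv => exact h v hv
  | zero => exact form_zero_right w
  | add y z _ _ hy hz => rw [form_add_right, hy, hz]; ring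
  | smul c y _ hy => rw [form_smul_right, hy]; ring

/-- A 3-dimensional subspace on which the form has signature `(2,1)` (in particular the
restriction of the form to it is nondegenerate). -/
def SigTwoOne (W : Submodule ℝ V6) : Prop :=
  ∃ e₁ e₂ e₃ : V6, W = Submodule.span ℝ ({e₁, e₂, e₃} : Set V6) ∧
    LinearIndependent ℝ ![e₁, e₂, e₃] ∧
    0 < form e₁ e₁ ∧ 0 < form e₂ e₂ ∧ form e₃ e₃ < 0 ∧
    form e₁ e₂ = 0 ∧ form e₁ e₃ = 0 ∧ form e₂ e₃ = 0


/-- Nondegeneracy: a vector of a signature-`(2,1)` subspace orthogonal to the whole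
subspace is zero. -/
lemma sig_nondeg {W : Submodule ℝ V6} (hW : SigTwoOne W) {x : V6} (hx : x ∈ W)
    (hperp : ∀ y ∈ W, form x y = 0) : x = 0 := by
  obtain ⟨e₁, e₂, e₃, hWspan, -, h11, h22, h33, h12, h13, h23⟩ := hW
  subst hWspan
  have he₁ : e₁ ∈ Submodule.span ℝ ({e₁, e₂, e₃} : Set V6) :=
    Submodule.subset_span (by simp)
  have he₂ : e₂ ∈ Submodule.span ℝ ({e₁, e₂, e₃} : Set V6) :=
    Submodule.subset_span (by simp)
  have he₃ : e₃ ∈ Submodule.span ℝ ({e₁, e₂, e₃} : Set V6) :=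
    Submodule.subset_span (by simp)
  rw [Submodule.mem_span_insert] at hx
  obtain ⟨a, y, hy, rfl⟩ := hx
  rw [Submodule.mem_span_insert] at hy
  obtain ⟨b, z, hz, rfl⟩ := hy
  rw [Submodule.mem_span_singleton] at hz
  obtain ⟨c, rfl⟩ := hz
  have key : ∀ d : V6, form (a • e₁ + (b • e₂ + c • e₃)) d
      = a * form e₁ d + b * form e₂ d + c * form e₃ d := by
    intro d
    rw [form_add_left, form_add_left, form_smul_left, form_smul_left, form_smul_left]; ring
  have h1 := hperp e₁ he₁; have h2 := hperp e₂ he₂; have h3 := hperp e₃ he₃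
  rw [key] at h1 h2 h3
  rw [form_comm e₂ e₁, form_comm e₃ e₁] at h1
  rw [form_comm e₃ e₂] at h2
  simp only [h12, h13, h23, mul_zero] at h1 h2 h3
  have ha : a = 0 := by
    have : a * form e₁ e₁ = 0 := by linarith
    exact (mul_eq_zero.1 this).resolve_right (ne_of_gt h11)
  have hb : b = 0 := by
    have : b * form e₂ e₂ = 0 := by linarith
    exact (mul_eq_zero.1 this).resolve_right (ne_of_gt h22)
  have hc : c = 0 := by
    have : c * form e₃ e₃ = 0 := by linarith
    exact (mul_eq_zero.1 this).resolve_right (ne_of_lt h33)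
  simp [ha, hb, hc]

/-- Lemma 3.3 of the paper: given a regular sphere curve `σ`, a bundle `V ⊇ span{σ,σ'}`
of signature `(2,1)`, and a regular parametrisation `τ` of the projective light cone of
`V^⊥`, the bundle `f = span{σ,τ}` is a Legendre map: totally isotropic, satisfying the
contact condition and the immersion condition. -/
theorem envelope_of_sphere_curve_is_legendre
    (I J : Set ℝ) (hI : IsOpen I) (hJ : IsOpen J)
    (hIconn : I.OrdConnected) (hJconn : J.OrdConnected)
    (σ : ℝ → V6)
    (hσsmooth : ContDiffOn ℝ (⊤ : ℕ∞) σ I)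
    (hσnull : ∀ t ∈ I, form (σ t) (σ t) = 0)
    (hσ0 : ∀ t ∈ I, σ t ≠ 0)
    (hσreg : ∀ t ∈ I, 0 < form (deriv σ t) (deriv σ t))
    (v₁ v₂ v₃ : ℝ → V6)
    (hv₁ : ContDiffOn ℝ (⊤ : ℕ∞) v₁ I) (hv₂ : ContDiffOn ℝ (⊤ : ℕ∞) v₂ I)
    (hv₃ : ContDiffOn ℝ (⊤ : ℕ∞) v₃ I)
    (hvindep : ∀ t ∈ I, LinearIndependent ℝ ![v₁ t, v₂ t, v₃ t])
    (hσV : ∀ t ∈ I, σ t ∈ Submodule.span ℝ ({v₁ t, v₂ t, v₃ t} : Set V6))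
    (hσ'V : ∀ t ∈ I, deriv σ t ∈ Submodule.span ℝ ({v₁ t, v₂ t, v₃ t} : Set V6))
    (hVsig : ∀ t ∈ I, SigTwoOne (Submodule.span ℝ ({v₁ t, v₂ t, v₃ t} : Set V6)))
    (τ : ℝ × ℝ → V6)
    (hτsmooth : ContDiffOn ℝ (⊤ : ℕ∞) τ (I ×ˢ J))
    (hτ0 : ∀ p ∈ I ×ˢ J, τ p ≠ 0)
    (hτnull : ∀ p ∈ I ×ˢ J, form (τ p) (τ p) = 0)
    (hτperp : ∀ p ∈ I ×ˢ J,
      ∀ x ∈ Submodule.span ℝ ({v₁ p.1, v₂ p.1, v₃ p.1} : Set V6),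
        form (τ p) x = 0)
    (hτreg : ∀ p ∈ I ×ˢ J, pv τ p ∉ Submodule.span ℝ ({τ p} : Set V6)) :
    ∀ p ∈ I ×ˢ J,
      -- (i) `f = span{σ,τ}` is a totally isotropic 2-plane
      (LinearIndependent ℝ ![σ p.1, τ p] ∧
        form (σ p.1) (σ p.1) = 0 ∧ form (σ p.1) (τ p) = 0 ∧
        form (τ p) (τ p) = 0) ∧
      -- (ii) the contact condition
      (form (pu (fun q => σ q.1) p) (τ p) = 0 ∧
        form (pv (fun q => σ q.1) p) (τ p) = 0 ∧
        form (pu τ p) (σ p.1) = 0 ∧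
        form (pv τ p) (σ p.1) = 0) ∧
      -- (iii) the immersion condition
      (∀ a b : ℝ, ¬(a = 0 ∧ b = 0) →
        (a • pu (fun q => σ q.1) p + b • pv (fun q => σ q.1) p
            ∉ spanF (fun q => σ q.1) τ p ∨
          a • pu τ p + b • pv τ p ∉ spanF (fun q => σ q.1) τ p)) := by
  intro p hp
  have hpI : p.1 ∈ I := hp.1
  have hpJ : p.2 ∈ J := hp.2
  have hnp : I ×ˢ J ∈ nhds p := (hI.prod hJ).mem_nhds hp
  have hnt : I ∈ nhds p.1 := hI.mem_nhds hpI
  set W : Submodule ℝ V6 := Submodule.span ℝ ({v₁ p.1, v₂ p.1, v₃ p.1} : Set V6) with hW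
  -- differentiability facts
  have hτd : HasFDerivAt τ (fderiv ℝ τ p) p :=
    ((hτsmooth.contDiffAt hnp).differentiableAt (by simp)).hasFDerivAt
  have hσdf : HasFDerivAt σ (fderiv ℝ σ p.1) p.1 :=
    ((hσsmooth.contDiffAt hnt).differentiableAt (by simp)).hasFDerivAt
  have hσc : HasFDerivAt (fun q : ℝ × ℝ => σ q.1)
      ((fderiv ℝ σ p.1).comp (ContinuousLinearMap.fst ℝ ℝ ℝ)) p :=
    hσdf.comp p hasFDerivAt_fst
  have hcomp_u : ((fderiv ℝ σ p.1).comp (ContinuousLinearMap.fst ℝ ℝ ℝ))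
      ((1 : ℝ), (0 : ℝ)) = deriv σ p.1 := by
    simp only [ContinuousLinearMap.comp_apply, ContinuousLinearMap.coe_fst']
    exact fderiv_apply_one_eq_deriv
  have hcomp_v : ((fderiv ℝ σ p.1).comp (ContinuousLinearMap.fst ℝ ℝ ℝ))
      ((0 : ℝ), (1 : ℝ)) = 0 := by
    simp
  have hpuσ : pu (fun q => σ q.1) p = deriv σ p.1 := by
    rw [pu, hσc.fderiv]; exact hcomp_u
  have hpvσ : pv (fun q => σ q.1) p = 0 := by
    rw [pv, hσc.fderiv]; exact hcomp_v
  -- basic orthogonality facts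
  have hσmem : σ p.1 ∈ W := hσV p.1 hpI
  have hσ'mem : deriv σ p.1 ∈ W := hσ'V p.1 hpI
  have hτσ : form (τ p) (σ p.1) = 0 := hτperp p hp _ hσmem
  have hτσ' : form (τ p) (deriv σ p.1) = 0 := hτperp p hp _ hσ'mem
  have hστ : form (σ p.1) (τ p) = 0 := by rw [form_comm]; exact hτσ
  -- derivative of `form (τ q) (σ q.1) = 0`
  have hev : ∀ᶠ q in nhds p, form (τ q) (σ q.1) = 0 := by
    filter_upwards [hnp] with q hq
    exact hτperp q hq _ (hσV q.1 hq.1)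
  have key_u : form (pu τ p) (σ p.1) = 0 := by
    have h := form_deriv_zero hτd hσc hev ((1 : ℝ), (0 : ℝ))
    rw [hcomp_u, hτσ'] at h
    rw [pu]; linarith
  have key_v : form (pv τ p) (σ p.1) = 0 := by
    have h := form_deriv_zero hτd hσc hev ((0 : ℝ), (1 : ℝ))
    rw [hcomp_v, form_zero_right] at h
    rw [pv]; linarith
  -- `pv τ p` is orthogonal to `W`
  have hperp_comp : ∀ v : ℝ → V6, ContDiffOn ℝ (⊤ : ℕ∞) v I →
      (∀ q ∈ I ×ˢ J, form (τ q) (v q.1) = 0) → form (pv τ p) (v p.1) = 0 := by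
    intro v hv hvz
    have hvd : HasFDerivAt v (fderiv ℝ v p.1) p.1 :=
      ((hv.contDiffAt hnt).differentiableAt (by simp)).hasFDerivAt
    have hvc : HasFDerivAt (fun q : ℝ × ℝ => v q.1)
        ((fderiv ℝ v p.1).comp (ContinuousLinearMap.fst ℝ ℝ ℝ)) p :=
      hvd.comp p hasFDerivAt_fst
    have hev' : ∀ᶠ q in nhds p, form (τ q) (v q.1) = 0 := by
      filter_upwards [hnp] with q hq; exact hvz q hq
    have h := form_deriv_zero hτd hvc hev' ((0 : ℝ), (1 : ℝ))
    have h0 : ((fderiv ℝ v p.1).comp (ContinuousLinearMap.fst ℝ ℝ ℝ))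
        ((0 : ℝ), (1 : ℝ)) = 0 := by simp
    rw [h0, form_zero_right] at h
    rw [pv]; linarith
  have hpvV : ∀ x ∈ W, form (pv τ p) x = 0 := by
    intro x hx
    refine form_span_zero ?_ hx
    intro v hv
    simp only [Set.mem_insert_iff, Set.mem_singleton_iff] at hv
    rcases hv with rfl | rfl | rfl
    · exact hperp_comp v₁ hv₁ fun q hq =>
        hτperp q hq _ (Submodule.subset_span (by simp))
    · exact hperp_comp v₂ hv₂ fun q hq =>
        hτperp q hq _ (Submodule.subset_span (by simp))
    · exact hperp_comp v₃ hv₃ fun q hq =>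
        hτperp q hq _ (Submodule.subset_span (by simp))
  have hWsig : SigTwoOne W := hVsig p.1 hpI
  -- linear independence of σ and τ
  have hind : LinearIndependent ℝ ![σ p.1, τ p] := by
    rw [LinearIndependent.pair_iff]
    intro s u hsu
    have hu : u = 0 := by
      by_contra hu
      have h1 : u • τ p = -(s • σ p.1) := eq_neg_of_add_eq_zero_right hsu
      have hmem : τ p ∈ W := by
        have h2 : τ p = u⁻¹ • (u • τ p) := by
          rw [smul_smul, inv_mul_cancel₀ hu, one_smul]
        rw [h2, h1]
        exact Submodule.smul_mem _ _ (Submodule.neg_mem _ (Submodule.smul_mem _ _ hσmem))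
      exact hτ0 p hp (sig_nondeg hWsig hmem fun y hy => hτperp p hp y hy)
    rw [hu, zero_smul, add_zero] at hsu
    have hs : s = 0 := by
      rcases smul_eq_zero.1 hsu with hs | h0
      · exact hs
      · exact absurd h0 (hσ0 p.1 hpI)
    exact ⟨hs, hu⟩
  -- σ' is not in f
  have hσ'notf : deriv σ p.1 ∉ spanF (fun q => σ q.1) τ p := by
    intro hmem
    simp only [spanF] at hmem
    rw [Submodule.mem_span_pair] at hmem
    obtain ⟨s, u, hsu⟩ := hmem
    have h0 : form (deriv σ p.1) (deriv σ p.1) = 0 := by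
      rw [← hsu, form_combo, hσnull p.1 hpI, hστ, hτnull p hp]
      ring
    exact absurd h0 (ne_of_gt (hσreg p.1 hpI))
  -- pv τ is not in f
  have hpvτnotf : pv τ p ∉ spanF (fun q => σ q.1) τ p := by
    intro hmem
    simp only [spanF] at hmem
    rw [Submodule.mem_span_pair] at hmem
    obtain ⟨s, u, hsu⟩ := hmem
    have hs : s = 0 := by
      by_contra hs
      have hmem2 : s • σ p.1 ∈ W := Submodule.smul_mem _ _ hσmem
      have hperp2 : ∀ y ∈ W, form (s • σ p.1) y = 0 := by
        intro y hy
        have h1 : form (pv τ p) y = 0 := hpvV y hy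
        have h2 : form (τ p) y = 0 := hτperp p hp y hy
        have h3 : form (pv τ p) y = s * form (σ p.1) y + u * form (τ p) y := by
          rw [← hsu, form_add_left, form_smul_left, form_smul_left]
        rw [h1, h2] at h3
        rw [form_smul_left]
        linarith
      have := sig_nondeg hWsig hmem2 hperp2
      rcases smul_eq_zero.1 this with h | h
      · exact hs h
      · exact hσ0 p.1 hpI h
    rw [hs, zero_smul, zero_add] at hsu
    exact hτreg p hp (by rw [← hsu]; exact Submodule.mem_span_singleton.2 ⟨u, rfl⟩)
  refine ⟨⟨hind, hσnull p.1 hpI, hστ, hτnull p hp⟩, ⟨?_, ?_, key_u, key_v⟩, ?_⟩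
  · rw [hpuσ, form_comm]; exact hτσ'
  · rw [hpvσ]; exact form_zero_left _
  · intro a b hab
    by_cases ha : a = 0
    · have hb : b ≠ 0 := fun hb => hab ⟨ha, hb⟩
      right
      rw [ha, zero_smul, zero_add]
      intro hmem
      exact hpvτnotf ((Submodule.smul_mem_iff _ hb).1 hmem)
    · left
      rw [hpuσ, hpvσ, smul_zero, add_zero]
      intro hmem
      exact hσ'notf ((Submodule.smul_mem_iff _ ha).1 hmem)
end
end

section
/- Let I, J ⊆ ℝ be open intervals and σ : I×J → ℝ^6 smooth and nowhere zero with ∂_uσ(p) ∈ span{σ(p)} for every p ∈ I×J. Then there exists a smooth positive function μ : I×J → ℝ such that ∂_u(μσ) = 0 identically. Moreover such a rescaled lift is unique up to multiplication by a function constant in u: if ν : I×J → ℝ is smooth and ∂_u(νσ) = 0 with νσ nowhere zero, then ∂_u(ν/μ) = 0. -/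
noncomputable section

/-- The Euclidean norm-squared of σ. -/
def nsq (σ : ℝ × ℝ → V6) (q : ℝ × ℝ) : ℝ := ∑ i, σ q i * σ q i

/-- Master pointwise lemma about `s := √(nsq σ)`. -/
theorem master_aux (σ : ℝ × ℝ → V6) (U : Set (ℝ × ℝ)) (hU : IsOpen U)
    (hσ : ContDiffOn ℝ (⊤ : ℕ∞) σ U) (hσ0 : ∀ p ∈ U, σ p ≠ 0)
    (hspan : ∀ p ∈ U, fderiv ℝ σ p (1, 0) ∈ Submodule.span ℝ ({σ p} : Set V6))
    (p : ℝ × ℝ) (hp : p ∈ U) :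
    ∃ (Ds : ℝ × ℝ →L[ℝ] ℝ) (c : ℝ),
      HasFDerivAt (fun q => Real.sqrt (nsq σ q)) Ds p ∧
      Ds (1, 0) = c * Real.sqrt (nsq σ p) ∧
      fderiv ℝ σ p (1, 0) = c • σ p ∧
      0 < Real.sqrt (nsq σ p) ∧
      ContDiffAt ℝ (⊤ : ℕ∞) (fun q => Real.sqrt (nsq σ q)) p := by
  have hσat : ContDiffAt ℝ (⊤ : ℕ∞) σ p := hσ.contDiffAt (hU.mem_nhds hp)
  have hD : HasFDerivAt σ (fderiv ℝ σ p) p :=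
    (hσat.differentiableAt (by simp)).hasFDerivAt
  obtain ⟨c, hc⟩ := Submodule.mem_span_singleton.mp (hspan p hp)
  -- coordinates
  have hi : ∀ i : Fin 6, HasFDerivAt (fun q => σ q i)
      ((ContinuousLinearMap.proj i).comp (fderiv ℝ σ p)) p := fun i =>
    (ContinuousLinearMap.proj i :
        V6 →L[ℝ] ℝ).hasFDerivAt.comp p hD
  -- derivative of nsq
  have hDN : HasFDerivAt (nsq σ)
      (∑ i : Fin 6, (σ p i • (ContinuousLinearMap.proj i).comp (fderiv ℝ σ p)
        + σ p i • (ContinuousLinearMap.proj i).comp (fderiv ℝ σ p))) p := by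
    have := HasFDerivAt.sum (u := (Finset.univ : Finset (Fin 6)))
      (A := fun i q => σ q i * σ q i)
      (A' := fun i => σ p i • (ContinuousLinearMap.proj i).comp (fderiv ℝ σ p)
        + σ p i • (ContinuousLinearMap.proj i).comp (fderiv ℝ σ p))
      (fun i _ => (hi i).mul (hi i))
    exact this
  have hNpos : 0 < nsq σ p := by
    obtain ⟨j, hj⟩ : ∃ j, σ p j ≠ 0 := by
      by_contra h
      push_neg at h
      exact hσ0 p hp (funext h)
    exact Finset.sum_pos' (fun i _ => mul_self_nonneg _)
      ⟨j, Finset.mem_univ j, mul_self_pos.mpr hj⟩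
  have hspos : 0 < Real.sqrt (nsq σ p) := Real.sqrt_pos.mpr hNpos
  have hs : HasFDerivAt (fun q => Real.sqrt (nsq σ q))
      ((1 / (2 * Real.sqrt (nsq σ p))) •
        (∑ i : Fin 6, (σ p i • (ContinuousLinearMap.proj i).comp (fderiv ℝ σ p)
          + σ p i • (ContinuousLinearMap.proj i).comp (fderiv ℝ σ p)))) p :=
    hDN.sqrt hNpos.ne'
  refine ⟨_, c, hs, ?_, (hc.symm : _), hspos, ?_⟩
  · have hval : (∑ i : Fin 6, (σ p i • (ContinuousLinearMap.proj i).comp (fderiv ℝ σ p)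
        + σ p i • (ContinuousLinearMap.proj i).comp (fderiv ℝ σ p))) (1, 0)
        = 2 * c * nsq σ p := by
      rw [ContinuousLinearMap.sum_apply]
      have : ∀ i : Fin 6,
          (σ p i • (ContinuousLinearMap.proj i).comp (fderiv ℝ σ p)
            + σ p i • (ContinuousLinearMap.proj i).comp (fderiv ℝ σ p)) (1, 0)
          = 2 * c * (σ p i * σ p i) := by
        intro i
        have h1 : ((fderiv ℝ σ p) (1, 0)) i = c * σ p i := by
          rw [← hc]; simp
        simp only [ContinuousLinearMap.add_apply, ContinuousLinearMap.smul_apply,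
          ContinuousLinearMap.comp_apply, ContinuousLinearMap.proj_apply, h1, smul_eq_mul]
        ring
      rw [Finset.sum_congr rfl (fun i _ => this i), ← Finset.mul_sum]
      rfl
    rw [ContinuousLinearMap.smul_apply, hval, smul_eq_mul]
    field_simp
    linear_combination (-c) * Real.sq_sqrt hNpos.le
  · have hNat : ContDiffAt ℝ (⊤ : ℕ∞) (nsq σ) p := by
      have : ∀ i : Fin 6, ContDiffAt ℝ (⊤ : ℕ∞) (fun q => σ q i) p := fun i =>
        (ContinuousLinearMap.proj i : V6 →L[ℝ] ℝ).contDiff.comp_contDiffAt p hσat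
      exact ContDiffAt.sum (fun i _ => (this i).mul (this i))
    exact (Real.contDiffAt_sqrt hNpos.ne').comp p hNat

/-- If `σ` is a smooth nowhere-zero lift with `∂_uσ ∈ span{σ}` pointwise (the line
`span{σ}` is constant along the leaves of `∂_u`), then there is a smooth positive
function `μ` with `∂_u(μσ) = 0`; such a normalised lift is unique up to a factor
constant in `u`. -/
theorem exists_lift_constant_along_leaves
    (I J : Set ℝ) (hI : IsOpen I) (hJ : IsOpen J)
    (hIconn : I.OrdConnected) (hJconn : J.OrdConnected)
    (σ : ℝ × ℝ → V6)
    (hσ : ContDiffOn ℝ (⊤ : ℕ∞) σ (I ×ˢ J))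
    (hσ0 : ∀ p ∈ I ×ˢ J, σ p ≠ 0)
    (hspan : ∀ p ∈ I ×ˢ J, pu σ p ∈ Submodule.span ℝ ({σ p} : Set V6)) :
    ∃ μ : ℝ × ℝ → ℝ,
      ContDiffOn ℝ (⊤ : ℕ∞) μ (I ×ˢ J) ∧
      (∀ p ∈ I ×ˢ J, 0 < μ p) ∧
      (∀ p ∈ I ×ˢ J, pu (fun q => μ q • σ q) p = 0) ∧
      (∀ ν : ℝ × ℝ → ℝ,
        ContDiffOn ℝ (⊤ : ℕ∞) ν (I ×ˢ J) →
        (∀ p ∈ I ×ˢ J, pu (fun q => ν q • σ q) p = 0) →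
        (∀ p ∈ I ×ˢ J, ν p • σ p ≠ 0) →
        ∀ p ∈ I ×ˢ J, fderiv ℝ (fun q => ν q / μ q) p (1, 0) = 0) := by
  rcases (I ×ˢ J).eq_empty_or_nonempty with hUe | ⟨⟨u₀, v₀⟩, hu₀v₀⟩
  · refine ⟨fun _ => 1, contDiffOn_const, ?_, ?_, ?_⟩
    · intro p hp; rw [hUe] at hp; exact absurd hp (Set.notMem_empty p)
    · intro p hp; rw [hUe] at hp; exact absurd hp (Set.notMem_empty p)
    · intro ν _ _ _ p hp; rw [hUe] at hp; exact absurd hp (Set.notMem_empty p)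
  · rw [Set.mem_prod] at hu₀v₀
    obtain ⟨hu₀, hv₀⟩ := hu₀v₀
    set U : Set (ℝ × ℝ) := I ×ˢ J with hUdef
    have hU : IsOpen U := hI.prod hJ
    set s : ℝ × ℝ → ℝ := fun q => Real.sqrt (nsq σ q) with hsdef
    have master := master_aux σ U hU hσ hσ0 hspan
    -- the projection π q = (u₀, q.2)
    set π : ℝ × ℝ → ℝ × ℝ := fun q => (u₀, q.2) with hπdef
    have hπmem : ∀ p ∈ U, π p ∈ U := by
      intro p hp
      rw [hUdef, Set.mem_prod] at hp ⊢
      exact ⟨hu₀, hp.2⟩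
    set Lπ : ℝ × ℝ →L[ℝ] ℝ × ℝ :=
      (0 : ℝ × ℝ →L[ℝ] ℝ).prod (ContinuousLinearMap.snd ℝ ℝ ℝ) with hLπdef
    have hπ : ∀ p : ℝ × ℝ, HasFDerivAt π Lπ p := fun p =>
      (hasFDerivAt_const u₀ p).prodMk hasFDerivAt_snd
    set μ : ℝ × ℝ → ℝ := fun q => s (π q) / s q with hμdef
    -- derivative data for μ
    have hμkey : ∀ p ∈ U, ∃ (Dμ : ℝ × ℝ →L[ℝ] ℝ) (c : ℝ),
        HasFDerivAt μ Dμ p ∧ Dμ (1, 0) = -(c * μ p) ∧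
        fderiv ℝ σ p (1, 0) = c • σ p ∧ 0 < μ p := by
      intro p hp
      obtain ⟨Ds, c, hDs, hDsval, hcval, hspos, _⟩ := master p hp
      obtain ⟨Ds0, c0, hDs0, _, _, hs0pos, _⟩ := master (π p) (hπmem p hp)
      have hcomp : HasFDerivAt (fun q => s (π q)) (Ds0.comp Lπ) p :=
        HasFDerivAt.comp p hDs0 (hπ p)
      have hinv : HasFDerivAt (fun q => (s q)⁻¹) ((-(s p ^ 2)⁻¹) • Ds) p :=
        (hasDerivAt_inv hspos.ne').comp_hasFDerivAt p hDs
      have hmul : HasFDerivAt (fun q => s (π q) * (s q)⁻¹)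
          (s (π p) • ((-(s p ^ 2)⁻¹) • Ds) + (s p)⁻¹ • Ds0.comp Lπ) p :=
        hcomp.mul hinv
      have hμeq : μ = fun q => s (π q) * (s q)⁻¹ := by
        funext q; rw [hμdef]; exact div_eq_mul_inv _ _
      refine ⟨_, c, hμeq ▸ hmul, ?_, hcval, div_pos hs0pos hspos⟩
      have hLπ10 : Lπ (1, 0) = (0, 0) := by
        simp [hLπdef]
      simp only [ContinuousLinearMap.add_apply, ContinuousLinearMap.smul_apply,
        ContinuousLinearMap.comp_apply, hLπ10, hDsval]
      have : Ds0 ((0 : ℝ), (0 : ℝ)) = 0 := by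
        have : ((0 : ℝ), (0 : ℝ)) = (0 : ℝ × ℝ) := rfl
        rw [this, map_zero]
      rw [this]
      rw [hμdef]
      have h2 : s p ≠ 0 := hspos.ne'
      field_simp
      have h3 : Real.sqrt (nsq σ p) = s p := rfl
      rw [h3]
      simp only [smul_eq_mul, mul_zero, add_zero]
      have h4 : s p * s p * (s p ^ 2)⁻¹ = 1 := by
        rw [← sq]; exact mul_inv_cancel₀ (pow_ne_zero 2 h2)
      linear_combination (-(c * s (π p))) * h4
    refine ⟨μ, ?_, ?_, ?_, ?_⟩
    · -- smoothness of μ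
      intro p hp
      obtain ⟨_, _, _, _, _, hspos, hsat⟩ := master p hp
      obtain ⟨_, _, _, _, _, _, hs0at⟩ := master (π p) (hπmem p hp)
      have hπcd : ContDiffAt ℝ (⊤ : ℕ∞) π p := contDiffAt_const.prodMk contDiffAt_snd
      have h1 : ContDiffAt ℝ (⊤ : ℕ∞) (fun q => s (π q)) p := hs0at.comp p hπcd
      exact ((h1.div hsat hspos.ne').contDiffWithinAt)
    · intro p hp
      obtain ⟨_, _, _, _, _, hpos⟩ := hμkey p hp
      exact hpos
    · -- ∂_u (μ σ) = 0
      intro p hp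
      obtain ⟨Dμ, c, hDμ, hDμval, hcval, hμpos⟩ := hμkey p hp
      have hD : HasFDerivAt σ (fderiv ℝ σ p) p :=
        ((hσ.contDiffAt (hU.mem_nhds hp)).differentiableAt (by simp)).hasFDerivAt
      have hsmul : HasFDerivAt (fun q => μ q • σ q)
          (μ p • fderiv ℝ σ p + Dμ.smulRight (σ p)) p := hDμ.smul hD
      rw [pu, hsmul.fderiv]
      simp only [ContinuousLinearMap.add_apply, ContinuousLinearMap.smulRight_apply,
        ContinuousLinearMap.smul_apply, hcval, hDμval]
      rw [smul_smul, neg_smul, mul_comm]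
      exact add_neg_cancel _
    · -- uniqueness
      intro ν hν hνpu hν0 p hp
      obtain ⟨Dμ, c, hDμ, hDμval, hcval, hμpos⟩ := hμkey p hp
      have hD : HasFDerivAt σ (fderiv ℝ σ p) p :=
        ((hσ.contDiffAt (hU.mem_nhds hp)).differentiableAt (by simp)).hasFDerivAt
      have hνD : HasFDerivAt ν (fderiv ℝ ν p) p :=
        ((hν.contDiffAt (hU.mem_nhds hp)).differentiableAt (by simp)).hasFDerivAt
      have hsmul : HasFDerivAt (fun q => ν q • σ q)
          (ν p • fderiv ℝ σ p + (fderiv ℝ ν p).smulRight (σ p)) p := hνD.smul hD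
      have hz := hνpu p hp
      rw [pu, hsmul.fderiv] at hz
      simp only [ContinuousLinearMap.add_apply, ContinuousLinearMap.smulRight_apply,
        ContinuousLinearMap.smul_apply, hcval] at hz
      rw [smul_smul] at hz
      have hcoef : ν p * c + fderiv ℝ ν p (1, 0) = 0 := by
        by_contra h
        have := hσ0 p hp
        rw [← add_smul] at hz
        exact this (by
          have := smul_eq_zero.mp hz
          rcases this with h' | h'
          · exact absurd h' h
          · exact h')
      have hνval : fderiv ℝ ν p (1, 0) = -(ν p * c) := by linarith
      have hdiv : HasFDerivAt (fun q => ν q / μ q)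
          ((1 / μ p ^ 2) • (μ p • fderiv ℝ ν p - ν p • Dμ)) p := by
        have hinv : HasFDerivAt (fun q => (μ q)⁻¹) ((-(μ p ^ 2)⁻¹) • Dμ) p :=
          (hasDerivAt_inv hμpos.ne').comp_hasFDerivAt p hDμ
        have hmul : HasFDerivAt (fun q => ν q * (μ q)⁻¹)
            (ν p • ((-(μ p ^ 2)⁻¹) • Dμ) + (μ p)⁻¹ • fderiv ℝ ν p) p :=
          hνD.mul hinv
        have heq : (fun q => ν q / μ q) = fun q => ν q * (μ q)⁻¹ := by
          funext q; exact div_eq_mul_inv _ _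
        rw [heq]
        convert hmul using 1
        refine ContinuousLinearMap.ext fun z => ?_
        simp only [ContinuousLinearMap.add_apply, ContinuousLinearMap.smul_apply,
          ContinuousLinearMap.sub_apply, smul_eq_mul]
        have h2 : μ p ≠ 0 := hμpos.ne'
        field_simp
        ring
      rw [hdiv.fderiv]
      simp only [ContinuousLinearMap.smul_apply, ContinuousLinearMap.sub_apply,
        smul_eq_mul, hνval, hDμval]
      ring
end
end
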